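/- arXiv:1501.07514 — 3 statements merged into one kernel-verified Lean document; each statement's English description precedes it below -/
import Mathlib

section
/- Let (X, μ) be a finite measure space and let (g_n)_{n∈ℕ} be a sequence of measurable functions g_n : X → [0, ∞) with ∫_X g_n dμ = 1 for every n (probability densities). Then: (i) for every real p ∈ [2, ∞), the following are equivalent: (a) for every sequence (c_n) of nonnegative reals with ∑_n c_n² < ∞, the function x ↦ √(∑_n c_n² g_n(x)) belongs to L^p(X); (b) sup_n ‖√(g_n)‖_{L^p(X)} < ∞. (ii) for every real q ∈ [1, 2], the following are equivalent: (a') for every sequence (c_n) of nonnegative reals, if the function x ↦ √(∑_n c_n² g_n(x)) belongs to L^q(X) then ∑_n c_n² < ∞; (b') inf_n ‖√(g_n)‖_{L^q(X)} > 0. -/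
/-!
Put `f n = ofReal ∘ g n`, `r = p / 2` and `I n = ∫ f n ^ r`, so that `‖√(g n)‖_p = (I n) ^ (1 / p)`
and the integrand is `(∑ c n ^ 2 * f n) ^ r`.
For `r ≥ 1`, Minkowski's inequality for series bounds `‖∑ c n ^ 2 * f n‖_r` by
`(∑ c n ^ 2) * (sup I) ^ (1 / r)`. For `r ≤ 1`, concavity of `t ↦ t ^ r` (weighted Hölder) reverses
it: `(inf I) * (∑ c n ^ 2) ^ r ≤ ∫ (∑ c n ^ 2 * f n) ^ r`.
The converse implications are gliding-hump arguments. If `sup I = ∞` (resp. `inf I = 0`, although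
every `I n` is positive since `∫ g n = 1`), pick a strictly increasing subsequence along which `I`
grows (resp. decays) geometrically and put the weights on it; for `r ≤ 1` the integral is then
controlled by subadditivity of `t ↦ t ^ r`, `∫ (∑ f n) ^ r ≤ ∑ I n`.
-/

open MeasureTheory Filter Function
open scoped ENNReal

namespace ENNReal

theorem iSup_rpow {ι : Sort*} {r : ℝ} (hr : 0 < r) (u : ι → ℝ≥0∞) :
    (⨆ i, u i) ^ r = ⨆ i, u i ^ r :=
  (orderIsoRpow r hr).map_iSup u

theorem iInf_rpow {ι : Sort*} {r : ℝ} (hr : 0 < r) (u : ι → ℝ≥0∞) :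
    (⨅ i, u i) ^ r = ⨅ i, u i ^ r :=
  (orderIsoRpow r hr).map_iInf u

theorem rpow_tsum_le_tsum_rpow {r : ℝ} (hr0 : 0 < r) (hr1 : r ≤ 1) (f : ℕ → ℝ≥0∞) :
    (∑' n, f n) ^ r ≤ ∑' n, f n ^ r := by
  rw [ENNReal.tsum_eq_iSup_sum, iSup_rpow hr0]
  refine iSup_le fun s => le_trans ?_ (ENNReal.sum_le_tsum s)
  exact Finset.le_sum_of_subadditive (· ^ r) (by simp [hr0])
    (fun a b => rpow_add_le_add_rpow a b hr0.le hr1) s f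

theorem exists_le_ofReal_iff_iSup_ne_top {ι : Sort*} (u : ι → ℝ≥0∞) :
    (∃ B : ℝ, ∀ i, u i ≤ ENNReal.ofReal B) ↔ ⨆ i, u i ≠ ∞ := by
  refine ⟨fun ⟨B, hB⟩ => ne_top_of_le_ne_top ofReal_ne_top (iSup_le hB),
    fun h => ⟨(⨆ i, u i).toReal, fun i => ?_⟩⟩
  rw [ofReal_toReal h]
  exact le_iSup u i

theorem exists_ofReal_le_iff_iInf_ne_zero {ι : Sort*} (u : ι → ℝ≥0∞) :
    (∃ ε : ℝ, 0 < ε ∧ ∀ i, ENNReal.ofReal ε ≤ u i) ↔ ⨅ i, u i ≠ 0 := by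
  refine ⟨fun ⟨ε, hε, hu⟩ => ((ofReal_pos.2 hε).trans_le (le_iInf hu)).ne', fun h => ?_⟩
  obtain ⟨ε, -, hε, hεu⟩ := lt_iff_exists_real_btwn.1 (pos_iff_ne_zero.2 h)
  exact ⟨ε, ofReal_pos.1 hε, fun i => hεu.le.trans (iInf_le u i)⟩

end ENNReal

theorem frequently_lt_of_iInf_eq {α : Type*} [CompleteLinearOrder α] {u : ℕ → α} {a b : α}
    (hu : ∀ n, a < u n) (h : ⨅ n, u n = a) (hb : a < b) : ∃ᶠ n in atTop, u n < b := by
  by_contra hfreq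
  obtain ⟨N, hN⟩ := eventually_atTop.1 (not_frequently.1 hfreq)
  have hlt : a < b ⊓ (Finset.range N).inf u :=
    lt_inf_iff.2 ⟨hb, (Finset.lt_inf_iff (hb.trans_le le_top)).2 fun n _ => hu n⟩
  refine hlt.not_ge (h ▸ le_iInf fun n => ?_)
  rcases lt_or_ge n N with hn | hn
  · exact inf_le_right.trans (Finset.inf_le (Finset.mem_range.2 hn))
  · exact inf_le_left.trans (not_lt.1 (hN n hn))

theorem frequently_lt_of_iSup_eq {α : Type*} [CompleteLinearOrder α] {u : ℕ → α} {a b : α}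
    (hu : ∀ n, u n < a) (h : ⨆ n, u n = a) (hb : b < a) : ∃ᶠ n in atTop, b < u n :=
  frequently_lt_of_iInf_eq (α := αᵒᵈ) hu h hb

namespace Function

theorem extend_zero_nonneg {α β γ : Type*} [Preorder γ] [Zero γ] {φ : α → β} {v : α → γ}
    (hv : ∀ a, 0 ≤ v a) (b : β) : 0 ≤ extend φ v 0 b := by
  classical
  rw [extend_def]
  split_ifs
  exacts [hv _, le_rfl]

theorem Injective.tsum_apply_extend_zero {α β γ M : Type*} [Zero γ] [AddCommMonoid M]
    [TopologicalSpace M] {φ : α → β} (hφ : Injective φ) (v : α → γ) (F : β → γ → M)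
    (hF : ∀ b, F b 0 = 0) : ∑' b, F b (extend φ v 0 b) = ∑' a, F (φ a) (v a) := by
  rw [← tsum_extend_zero hφ fun a => F (φ a) (v a)]
  congr 1 with b
  by_cases h : ∃ a, φ a = b
  · obtain ⟨a, rfl⟩ := h
    rw [hφ.extend_apply, hφ.extend_apply]
  · rw [extend_apply' _ _ _ h, extend_apply' _ _ _ h, Pi.zero_apply, Pi.zero_apply, hF]

end Function

theorem forall_nonneg_sq_iff {P : (ℕ → ℝ) → Prop} :
    (∀ c : ℕ → ℝ, (∀ n, 0 ≤ c n) → P (fun n => c n ^ 2)) ↔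
      ∀ w : ℕ → ℝ, (∀ n, 0 ≤ w n) → P w := by
  refine ⟨fun h w hw => ?_, fun h c _ => h _ fun n => sq_nonneg (c n)⟩
  simpa [Real.sq_sqrt (hw _)] using h (fun n => √(w n)) fun n => Real.sqrt_nonneg _

section Lebesgue

variable {X : Type*} [MeasurableSpace X] {μ : Measure X} {r : ℝ}

theorem lintegral_const_mul_rpow {a : ℝ≥0∞} (ha : a ≠ ∞) (hr : 0 ≤ r) (f : X → ℝ≥0∞) :
    ∫⁻ x, (a * f x) ^ r ∂μ = a ^ r * ∫⁻ x, f x ^ r ∂μ := by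
  simp_rw [ENNReal.mul_rpow_of_nonneg _ _ hr]
  exact lintegral_const_mul' _ _ (ENNReal.rpow_ne_top_of_nonneg hr ha)

theorem rpow_mul_lintegral_rpow_le_lintegral_rpow_tsum {a : ℕ → ℝ≥0∞} {n : ℕ} (ha : a n ≠ ∞)
    (hr : 0 ≤ r) (f : ℕ → X → ℝ≥0∞) :
    a n ^ r * ∫⁻ x, f n x ^ r ∂μ ≤ ∫⁻ x, (∑' m, a m * f m x) ^ r ∂μ := by
  rw [← lintegral_const_mul_rpow ha hr]
  exact lintegral_mono fun x => ENNReal.rpow_le_rpow (ENNReal.le_tsum n) hr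

theorem lintegral_rpow_tsum_le_of_one_le (hr : 1 ≤ r) {f : ℕ → X → ℝ≥0∞}
    (hf : ∀ n, AEMeasurable (f n) μ) :
    ∫⁻ x, (∑' n, f n x) ^ r ∂μ ≤ (∑' n, (∫⁻ x, f n x ^ r ∂μ) ^ r⁻¹) ^ r := by
  have hr0 : 0 < r := zero_lt_one.trans_le hr
  have hpartial : ∀ N, ∫⁻ x, (∑ n ∈ Finset.range N, f n x) ^ r ∂μ ≤
      (∑' n, (∫⁻ x, f n x ^ r ∂μ) ^ r⁻¹) ^ r := by
    intro N
    rw [← ENNReal.rpow_inv_le_iff hr0]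
    calc (∫⁻ x, (∑ n ∈ Finset.range N, f n x) ^ r ∂μ) ^ r⁻¹
        = eLpNorm' (∑ n ∈ Finset.range N, f n) r μ := by simp [eLpNorm', Finset.sum_apply]
      _ ≤ ∑ n ∈ Finset.range N, eLpNorm' (f n) r μ :=
        eLpNorm'_sum_le (fun n _ => (hf n).aestronglyMeasurable) hr
      _ ≤ _ := by simpa [eLpNorm'] using ENNReal.sum_le_tsum (Finset.range N)
  calc ∫⁻ x, (∑' n, f n x) ^ r ∂μ = ∫⁻ x, ⨆ N, (∑ n ∈ Finset.range N, f n x) ^ r ∂μ := by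
        simp_rw [ENNReal.tsum_eq_iSup_nat, ENNReal.iSup_rpow hr0]
    _ = ⨆ N, ∫⁻ x, (∑ n ∈ Finset.range N, f n x) ^ r ∂μ :=
        lintegral_iSup' (fun N => (Finset.aemeasurable_fun_sum _ fun n _ => hf n).pow_const r)
          (ae_of_all _ fun x N M hNM => ENNReal.rpow_le_rpow
            (Finset.sum_le_sum_of_subset (Finset.range_subset_range.2 hNM)) hr0.le)
    _ ≤ _ := iSup_le hpartial

theorem lintegral_rpow_tsum_le_of_le_one (hr0 : 0 < r) (hr1 : r ≤ 1) {f : ℕ → X → ℝ≥0∞}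
    (hf : ∀ n, AEMeasurable (f n) μ) :
    ∫⁻ x, (∑' n, f n x) ^ r ∂μ ≤ ∑' n, ∫⁻ x, f n x ^ r ∂μ := by
  rw [← lintegral_tsum fun n => (hf n).pow_const r]
  exact lintegral_mono fun x => ENNReal.rpow_tsum_le_tsum_rpow hr0 hr1 _

theorem mul_rpow_sum_le_lintegral_rpow_sum {ι : Type*} (hr0 : 0 < r) (hr1 : r ≤ 1)
    {s : Finset ι} {a : ι → ℝ≥0∞} {f : ι → X → ℝ≥0∞} {ε : ℝ≥0∞}
    (hf : ∀ n ∈ s, AEMeasurable (f n) μ) (ha : ∀ n ∈ s, a n ≠ ∞)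
    (hε : ∀ n ∈ s, ε ≤ ∫⁻ x, f n x ^ r ∂μ) :
    ε * (∑ n ∈ s, a n) ^ r ≤ ∫⁻ x, (∑ n ∈ s, a n * f n x) ^ r ∂μ := by
  set T := ∑ n ∈ s, a n
  rcases eq_or_ne T 0 with hT0 | hT0
  · simp [hT0, ENNReal.zero_rpow_of_pos hr0]
  have hTtop : T ≠ ∞ := ENNReal.sum_ne_top.2 ha
  -- weighted Hölder with exponent `r⁻¹ ≥ 1`, applied to the values `f n x ^ r`
  have hpt : ∀ x, ∑ n ∈ s, a n * f n x ^ r ≤ T ^ (1 - r) * (∑ n ∈ s, a n * f n x) ^ r := by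
    intro x
    have := ENNReal.inner_le_weight_mul_Lp_of_nonneg s ((one_le_inv₀ hr0).2 hr1) a
      (fun n => f n x ^ r)
    simpa [inv_inv, ← ENNReal.rpow_mul, mul_inv_cancel₀ hr0.ne'] using this
  have hint : ε * T ≤ T ^ (1 - r) * ∫⁻ x, (∑ n ∈ s, a n * f n x) ^ r ∂μ := calc
    ε * T = ∑ n ∈ s, a n * ε := by rw [Finset.mul_sum]; simp [mul_comm]
    _ ≤ ∑ n ∈ s, a n * ∫⁻ x, f n x ^ r ∂μ :=
      Finset.sum_le_sum fun n hn => by gcongr; exact hε n hn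
    _ = ∫⁻ x, ∑ n ∈ s, a n * f n x ^ r ∂μ := by
      rw [lintegral_finsetSum' _ fun n hn => ((hf n hn).pow_const r).const_mul _]
      exact Finset.sum_congr rfl fun n hn => (lintegral_const_mul' _ _ (ha n hn)).symm
    _ ≤ _ := (lintegral_mono hpt).trans_eq (lintegral_const_mul' _ _ (by finiteness))
  have hsplit : ε * T = T ^ (1 - r) * (ε * T ^ r) := by
    rw [mul_left_comm, ← ENNReal.rpow_add _ _ hT0 hTtop, sub_add_cancel, ENNReal.rpow_one]
  rw [hsplit] at hint
  exact (ENNReal.mul_le_mul_iff_right (ENNReal.rpow_pos (pos_iff_ne_zero.2 hT0) hTtop).ne'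
    (by finiteness)).1 hint

theorem mul_rpow_tsum_le_lintegral_rpow_tsum (hr0 : 0 < r) (hr1 : r ≤ 1) {a : ℕ → ℝ≥0∞}
    {f : ℕ → X → ℝ≥0∞} {ε : ℝ≥0∞} (hf : ∀ n, AEMeasurable (f n) μ) (ha : ∀ n, a n ≠ ∞)
    (hε : ∀ n, ε ≤ ∫⁻ x, f n x ^ r ∂μ) :
    ε * (∑' n, a n) ^ r ≤ ∫⁻ x, (∑' n, a n * f n x) ^ r ∂μ := by
  rw [ENNReal.tsum_eq_iSup_sum, ENNReal.iSup_rpow hr0, ENNReal.mul_iSup]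
  refine iSup_le fun s => (mul_rpow_sum_le_lintegral_rpow_sum hr0 hr1 (fun n _ => hf n)
    (fun n _ => ha n) fun n _ => hε n).trans ?_
  exact lintegral_mono fun x => ENNReal.rpow_le_rpow (ENNReal.sum_le_tsum s) hr0.le

theorem forall_summable_lintegral_rpow_tsum_lt_top_iff {f : ℕ → X → ℝ≥0∞} (hr : 1 ≤ r)
    (hf : ∀ n, AEMeasurable (f n) μ) :
    (∀ w : ℕ → ℝ, (∀ n, 0 ≤ w n) → Summable w →
        ∫⁻ x, (∑' n, ENNReal.ofReal (w n) * f n x) ^ r ∂μ < ∞) ↔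
      ⨆ n, ∫⁻ x, f n x ^ r ∂μ ≠ ∞ := by
  have hr0 : 0 < r := zero_lt_one.trans_le hr
  refine ⟨fun H hsup => ?_, fun hsup w hw hsum => ?_⟩
  · have hfin : ∀ n, ∫⁻ x, f n x ^ r ∂μ < ∞ := fun n => by
      simpa using (rpow_mul_lintegral_rpow_le_lintegral_rpow_tsum (n := n) ENNReal.ofReal_ne_top
        hr0.le f).trans_lt (H _ (fun m => by split_ifs <;> norm_num) (hasSum_ite_eq n 1).summable)
    -- with weight `(1 / 2) ^ k` at `φ k`, the term `φ k` alone contributes more than `k`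
    set t : ℕ → ℝ≥0∞ := fun k => k / ENNReal.ofReal ((1 / 2 : ℝ) ^ k) ^ r
    obtain ⟨φ, hφ, hφt⟩ := extraction_forall_of_frequently fun k =>
      frequently_lt_of_iSup_eq (b := t k) hfin hsup
        (ENNReal.div_lt_top (ENNReal.natCast_ne_top k) (by positivity))
    set w := extend φ (fun k => (1 / 2 : ℝ) ^ k) 0
    obtain ⟨k, hk⟩ := ENNReal.exists_nat_gt (H w (extend_zero_nonneg fun k => by positivity)
      ((summable_extend_zero hφ.injective).2 summable_geometric_two)).ne
    refine hk.not_ge ?_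
    calc (k : ℝ≥0∞) = ENNReal.ofReal ((1 / 2 : ℝ) ^ k) ^ r * t k :=
          (ENNReal.mul_div_cancel (by positivity) (by finiteness)).symm
      _ ≤ ENNReal.ofReal (w (φ k)) ^ r * ∫⁻ x, f (φ k) x ^ r ∂μ := by
          rw [show w (φ k) = (1 / 2 : ℝ) ^ k from hφ.injective.extend_apply _ _ k]
          gcongr
          exact (hφt k).le
      _ ≤ _ := rpow_mul_lintegral_rpow_le_lintegral_rpow_tsum ENNReal.ofReal_ne_top hr0.le f
  · calc ∫⁻ x, (∑' n, ENNReal.ofReal (w n) * f n x) ^ r ∂μ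
        ≤ (∑' n, (∫⁻ x, (ENNReal.ofReal (w n) * f n x) ^ r ∂μ) ^ r⁻¹) ^ r :=
          lintegral_rpow_tsum_le_of_one_le hr fun n => (hf n).const_mul _
      _ = (∑' n, ENNReal.ofReal (w n) * (∫⁻ x, f n x ^ r ∂μ) ^ r⁻¹) ^ r := by
          simp_rw [lintegral_const_mul_rpow ENNReal.ofReal_ne_top hr0.le,
            ENNReal.mul_rpow_of_nonneg _ _ (inv_nonneg.2 hr0.le), ENNReal.rpow_rpow_inv hr0.ne']
      _ ≤ (∑' n, ENNReal.ofReal (w n) * (⨆ m, ∫⁻ x, f m x ^ r ∂μ) ^ r⁻¹) ^ r := by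
          gcongr with n
          exact le_iSup (fun m => ∫⁻ x, f m x ^ r ∂μ) n
      _ = ((∑' n, ENNReal.ofReal (w n)) * (⨆ m, ∫⁻ x, f m x ^ r ∂μ) ^ r⁻¹) ^ r := by
          rw [ENNReal.tsum_mul_right]
      _ < ∞ := by
          have := hsum.tsum_ofReal_ne_top
          finiteness

theorem forall_summable_of_lintegral_rpow_tsum_lt_top_iff {f : ℕ → X → ℝ≥0∞} (hr0 : 0 < r)
    (hr1 : r ≤ 1) (hf : ∀ n, AEMeasurable (f n) μ) (hf0 : ∀ n, ∫⁻ x, f n x ^ r ∂μ ≠ 0) :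
    (∀ w : ℕ → ℝ, (∀ n, 0 ≤ w n) →
        ∫⁻ x, (∑' n, ENNReal.ofReal (w n) * f n x) ^ r ∂μ < ∞ → Summable w) ↔
      ⨅ n, ∫⁻ x, f n x ^ r ∂μ ≠ 0 := by
  refine ⟨fun H hinf => ?_, fun hinf w hw hM => ?_⟩
  · obtain ⟨φ, hφ, hφI⟩ := extraction_forall_of_frequently fun k =>
      frequently_lt_of_iInf_eq (fun n => pos_iff_ne_zero.2 (hf0 n)) hinf
        (ENNReal.pow_pos (by norm_num : (0 : ℝ≥0∞) < 2⁻¹) k)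
    set w := extend φ (1 : ℕ → ℝ) 0
    refine one_ne_zero ((summable_const_iff (1 : ℝ)).1
      ((summable_extend_zero hφ.injective).1 (H w (extend_zero_nonneg fun _ => zero_le_one) ?_)))
    calc ∫⁻ x, (∑' n, ENNReal.ofReal (w n) * f n x) ^ r ∂μ
        ≤ ∑' n, ∫⁻ x, (ENNReal.ofReal (w n) * f n x) ^ r ∂μ :=
          lintegral_rpow_tsum_le_of_le_one hr0 hr1 fun n => (hf n).const_mul _
      _ = ∑' n, ENNReal.ofReal (w n) ^ r * ∫⁻ x, f n x ^ r ∂μ := by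
          simp_rw [lintegral_const_mul_rpow ENNReal.ofReal_ne_top hr0.le]
      _ = ∑' k, ∫⁻ x, f (φ k) x ^ r ∂μ := by
          rw [hφ.injective.tsum_apply_extend_zero 1
            (fun n t => ENNReal.ofReal t ^ r * ∫⁻ x, f n x ^ r ∂μ)
            fun n => by simp [ENNReal.zero_rpow_of_pos hr0]]
          simp
      _ ≤ ∑' k, 2⁻¹ ^ k := ENNReal.tsum_le_tsum fun k => (hφI k).le
      _ < ∞ := by
          rw [ENNReal.tsum_geometric, ENNReal.one_sub_inv_two, inv_inv]
          exact ENNReal.ofNat_lt_top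
  · have hlow := mul_rpow_tsum_le_lintegral_rpow_tsum (a := fun n => ENNReal.ofReal (w n)) hr0 hr1
      hf (fun n => ENNReal.ofReal_ne_top)
      fun n => iInf_le (fun m => ∫⁻ x, f m x ^ r ∂μ) n
    have htop : ∑' n, ENNReal.ofReal (w n) ≠ ∞ := by
      intro h
      rw [h, ENNReal.top_rpow_of_pos hr0, ENNReal.mul_top hinf] at hlow
      exact hM.not_ge hlow
    simpa [ENNReal.toReal_ofReal (hw _)] using ENNReal.summable_toReal htop

theorem enorm_sqrt_rpow {p : ℝ} (hp : 0 < p) (y : ℝ) :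
    ‖√y‖ₑ ^ p = ENNReal.ofReal y ^ (p / 2) := by
  rcases le_total 0 y with hy | hy
  · rw [Real.enorm_eq_ofReal (Real.sqrt_nonneg y), Real.sqrt_eq_rpow,
      ← ENNReal.ofReal_rpow_of_nonneg hy (by norm_num), ← ENNReal.rpow_mul]
    ring_nf
  · simp [Real.sqrt_eq_zero'.2 hy, ENNReal.ofReal_of_nonpos hy, ENNReal.zero_rpow_of_pos hp,
      ENNReal.zero_rpow_of_pos (half_pos hp)]

theorem eLpNorm_sqrt_eq {p : ℝ} (hp : 0 < p) (g : X → ℝ) :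
    eLpNorm (fun x => √(g x)) (ENNReal.ofReal p) μ =
      (∫⁻ x, ENNReal.ofReal (g x) ^ (p / 2) ∂μ) ^ p⁻¹ := by
  rw [eLpNorm_eq_lintegral_rpow_enorm_toReal (by simpa using hp) ENNReal.ofReal_ne_top,
    ENNReal.toReal_ofReal hp.le, one_div]
  simp_rw [enorm_sqrt_rpow hp]

theorem lintegral_ofReal_rpow_ne_zero (hr : 0 < r) {g : X → ℝ} (hg : AEMeasurable g μ)
    (h : 0 < ∫ x, g x ∂μ) :
    ∫⁻ x, ENNReal.ofReal (g x) ^ r ∂μ ≠ 0 := by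
  intro h0
  rw [lintegral_eq_zero_iff' (hg.ennreal_ofReal.pow_const r)] at h0
  refine h.not_ge (integral_nonpos_of_ae ?_)
  filter_upwards [h0] with x hx
  simpa [ENNReal.rpow_eq_zero_iff_of_pos hr] using hx

end Lebesgue

theorem stmt6_general
    {X : Type*} [MeasurableSpace X] (μ : Measure X)
    (g : ℕ → X → ℝ) (hgmeas : ∀ n, Measurable (g n))
    (hgint : ∀ n, ∫ x, g n x ∂μ = 1) :
    (∀ p : ℝ, 2 ≤ p →
      ((∀ c : ℕ → ℝ, (∀ n, 0 ≤ c n) → Summable (fun n => (c n) ^ 2) →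
          ∫⁻ x, (∑' n, ENNReal.ofReal ((c n) ^ 2 * g n x)) ^ (p/2) ∂μ < ⊤)
        ↔ (∃ B : ℝ, ∀ n,
            eLpNorm (fun x => Real.sqrt (g n x)) (ENNReal.ofReal p) μ ≤ ENNReal.ofReal B)))
    ∧
    (∀ q : ℝ, 1 ≤ q → q ≤ 2 →
      ((∀ c : ℕ → ℝ, (∀ n, 0 ≤ c n) →
          (∫⁻ x, (∑' n, ENNReal.ofReal ((c n) ^ 2 * g n x)) ^ (q/2) ∂μ < ⊤) →
          Summable (fun n => (c n) ^ 2))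
        ↔ (∃ ε : ℝ, 0 < ε ∧ ∀ n,
            ENNReal.ofReal ε ≤ eLpNorm (fun x => Real.sqrt (g n x)) (ENNReal.ofReal q) μ))) := by
  have hf : ∀ n, AEMeasurable (fun x => ENNReal.ofReal (g n x)) μ :=
    fun n => (hgmeas n).ennreal_ofReal.aemeasurable
  simp_rw [ENNReal.ofReal_mul (sq_nonneg _)]
  refine ⟨fun p hp => ?_, fun q hq1 hq2 => ?_⟩
  · have hp0 : 0 < p := by linarith
    rw [ENNReal.exists_le_ofReal_iff_iSup_ne_top]
    simp_rw [eLpNorm_sqrt_eq hp0]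
    rw [← ENNReal.iSup_rpow (inv_pos.2 hp0), Ne, ENNReal.rpow_eq_top_iff_of_pos (inv_pos.2 hp0)]
    exact forall_nonneg_sq_iff.trans
      (forall_summable_lintegral_rpow_tsum_lt_top_iff (by linarith) hf)
  · have hq0 : 0 < q := by linarith
    rw [ENNReal.exists_ofReal_le_iff_iInf_ne_zero]
    simp_rw [eLpNorm_sqrt_eq hq0]
    rw [← ENNReal.iInf_rpow (inv_pos.2 hq0), Ne, ENNReal.rpow_eq_zero_iff_of_pos (inv_pos.2 hq0)]
    exact forall_nonneg_sq_iff.trans (forall_summable_of_lintegral_rpow_tsum_lt_top_iff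
      (by linarith) (by linarith) hf fun n => lintegral_ofReal_rpow_ne_zero (by linarith)
        (hgmeas n).aemeasurable (by rw [hgint n]; exact one_pos))

/-- Proposition 3.2, density formulation of the Paley–Zygmund criterion:
for probability densities `g_n` on a finite measure space `X`,
(i) for `p ∈ [2,∞)`: the map `(c_n) ↦ √(∑ c_n² g_n)` sends `ℓ²` into `L^p(X)` iff
`sup_n ‖√g_n‖_{L^p} < ∞`;
(ii) for `q ∈ [1,2]`: membership of `√(∑ c_n² g_n)` in `L^q(X)` forces `∑ c_n² < ∞` iff
`inf_n ‖√g_n‖_{L^q} > 0`. -/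
theorem stmt6
    {X : Type*} [MeasurableSpace X] (μ : Measure X) [IsFiniteMeasure μ]
    (g : ℕ → X → ℝ) (hgmeas : ∀ n, Measurable (g n))
    (hgpos : ∀ n x, 0 ≤ g n x)
    (hgint : ∀ n, ∫ x, g n x ∂μ = 1) :
    (∀ p : ℝ, 2 ≤ p →
      ((∀ c : ℕ → ℝ, (∀ n, 0 ≤ c n) → Summable (fun n => (c n) ^ 2) →
          ∫⁻ x, (∑' n, ENNReal.ofReal ((c n) ^ 2 * g n x)) ^ (p/2) ∂μ < ⊤)
        ↔ (∃ B : ℝ, ∀ n,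
            eLpNorm (fun x => Real.sqrt (g n x)) (ENNReal.ofReal p) μ ≤ ENNReal.ofReal B)))
    ∧
    (∀ q : ℝ, 1 ≤ q → q ≤ 2 →
      ((∀ c : ℕ → ℝ, (∀ n, 0 ≤ c n) →
          (∫⁻ x, (∑' n, ENNReal.ofReal ((c n) ^ 2 * g n x)) ^ (q/2) ∂μ < ⊤) →
          Summable (fun n => (c n) ^ 2))
        ↔ (∃ ε : ℝ, 0 < ε ∧ ∀ n,
            ENNReal.ofReal ε ≤ eLpNorm (fun x => Real.sqrt (g n x)) (ENNReal.ofReal q) μ))) :=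
  stmt6_general μ g hgmeas hgint
end

section
/- Let (X, μ) be a σ-finite measure space and let 1 ≤ p₁ < p < p₂ < ∞. For r ∈ [p₁, p₂], set θ₁(r) = (1/r − 1/p₂)/(1/p₁ − 1/p₂) and θ₂(r) = (1/p₁ − 1/r)/(1/p₁ − 1/p₂). There exists a constant C(p₁, p, p₂) ≥ 1 depending only on p₁, p, p₂ such that for every nonzero φ ∈ L^{p₁}(X) ∩ L^{p₂}(X), setting R(p) = ‖φ‖_{L^{p₁}}^{θ₁(p)} ‖φ‖_{L^{p₂}}^{θ₂(p)} / ‖φ‖_{L^{p}}, one has R(p) ≤ Q(φ, [p₁, p₂]) ≤ R(p)^{C(p₁,p,p₂)}. In particular, for a sequence (φ_n) of nonzero functions in L^{p₁}(X) ∩ L^{p₂}(X), the supremum over n of ‖φ_n‖_{L^{p₁}}^{θ₁(p)} ‖φ_n‖_{L^{p₂}}^{θ₂(p)} / ‖φ_n‖_{L^{p}} is finite if and only if sup_n Q(φ_n, [p₁, p₂]) is finite. -/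
/-!
Write `L(s) = log ‖φ‖_{L^{1/s}}`. Hölder's inequality makes `L` convex on `[1/p₂, 1/p₁]`, so the
gap `g` between the chord of `L` and `L` itself is concave, vanishes at both endpoints, and
`log R(r) = g(1/r)`. A concave function vanishing at the endpoints of `[a, b]` is bounded on
`[a, b]` by `max ((b - a)/(b - c)) ((b - a)/(c - a))` times its value at an interior point `c`;
exponentiating at `c = 1/p` gives `Q ≤ R(p)^C`, while `R(p) ≤ Q` holds because `p ∈ [p₁, p₂]`.
-/

open MeasureTheory
open scoped ENNReal NNReal

/-- The `L^r(μ)` norm, as a real number. -/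
noncomputable def lpN {X : Type*} [MeasurableSpace X] (μ : Measure X) (r : ℝ) (φ : X → ℝ) : ℝ :=
  (eLpNorm φ (ENNReal.ofReal r) μ).toReal

/-- `θ₁(r) = (1/r − 1/p₂)/(1/p₁ − 1/p₂)`. -/
noncomputable def th1 (p₁ p₂ r : ℝ) : ℝ := (1/r - 1/p₂) / (1/p₁ - 1/p₂)

/-- `θ₂(r) = (1/p₁ − 1/r)/(1/p₁ − 1/p₂)`. -/
noncomputable def th2 (p₁ p₂ r : ℝ) : ℝ := (1/p₁ - 1/r) / (1/p₁ - 1/p₂)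

/-- The interpolation defect `Q(φ, [p₁, p₂])` (Définition 14.1):
`sup_{r ∈ [p₁,p₂]} ‖φ‖_{p₁}^{θ₁(r)} ‖φ‖_{p₂}^{θ₂(r)} / ‖φ‖_r`. -/
noncomputable def interpDefect {X : Type*} [MeasurableSpace X] (μ : Measure X)
    (p₁ p₂ : ℝ) (φ : X → ℝ) : ℝ :=
  sSup {q : ℝ | ∃ r ∈ Set.Icc p₁ p₂,
    q = lpN μ p₁ φ ^ th1 p₁ p₂ r * lpN μ p₂ φ ^ th2 p₁ p₂ r / lpN μ r φ}

open Set

section Concave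

variable {𝕜 : Type*} [Field 𝕜] [LinearOrder 𝕜] [IsStrictOrderedRing 𝕜] {S : Set 𝕜} {g : 𝕜 → 𝕜}

theorem ConcaveOn.sub_mul_add_sub_mul_le (hg : ConcaveOn 𝕜 S g) {x y z : 𝕜} (hx : x ∈ S)
    (hz : z ∈ S) (hxy : x ≤ y) (hyz : y ≤ z) :
    (z - y) * g x + (y - x) * g z ≤ (z - x) * g y := by
  rcases (hxy.trans hyz).eq_or_lt with rfl | hxz
  · obtain rfl : y = x := le_antisymm hyz hxy
    simp
  rw [← sub_pos] at hxz
  have ha : 0 ≤ (z - y) / (z - x) := div_nonneg (sub_nonneg.2 hyz) hxz.le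
  have hb : 0 ≤ (y - x) / (z - x) := div_nonneg (sub_nonneg.2 hxy) hxz.le
  have key := hg.2 hx hz ha hb (by field)
  have hy : ((z - y) / (z - x)) • x + ((y - x) / (z - x)) • z = y := by
    simp only [smul_eq_mul]; field
  rw [hy, smul_eq_mul, smul_eq_mul, div_mul_eq_mul_div, div_mul_eq_mul_div, ← add_div,
    div_le_iff₀ hxz] at key
  linarith

theorem ConcaveOn.le_max_div_mul {a b : 𝕜} (hg : ConcaveOn 𝕜 (Icc a b) g) (ha : 0 ≤ g a)
    (hb : 0 ≤ g b) {c s : 𝕜} (hc : c ∈ Ioo a b) (hs : s ∈ Icc a b) :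
    g s ≤ max ((b - a) / (b - c)) ((b - a) / (c - a)) * g c := by
  have hab : a ≤ b := hs.1.trans hs.2
  have hgc : 0 ≤ g c := (le_min ha hb).trans <|
    hg.ge_on_segment (left_mem_Icc.2 hab) (right_mem_Icc.2 hab)
      (by rw [segment_eq_Icc hab]; exact Ioo_subset_Icc_self hc)
  have hbc : 0 < b - c := sub_pos.2 hc.2
  have hca : 0 < c - a := sub_pos.2 hc.1
  rcases le_total s c with hsc | hcs
  · have h := hg.sub_mul_add_sub_mul_le hs (right_mem_Icc.2 hab) hsc hc.2.le
    calc g s ≤ (b - a) / (b - c) * g c := by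
          rw [div_mul_eq_mul_div, le_div_iff₀ hbc]
          nlinarith [mul_nonneg (sub_nonneg.2 hsc) hb, mul_nonneg (sub_nonneg.2 hs.1) hgc]
      _ ≤ _ := by gcongr; exact le_max_left _ _
  · have h := hg.sub_mul_add_sub_mul_le (left_mem_Icc.2 hab) hs hc.1.le hcs
    calc g s ≤ (b - a) / (c - a) * g c := by
          rw [div_mul_eq_mul_div, le_div_iff₀ hca]
          nlinarith [mul_nonneg (sub_nonneg.2 hcs) ha, mul_nonneg (sub_nonneg.2 hs.2) hgc]
      _ ≤ _ := by gcongr; exact le_max_right _ _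

end Concave

theorem eLpNorm_ofReal_inv_add_le {X E : Type*} [MeasurableSpace X] {μ : Measure X}
    [NormedAddCommGroup E] {f : X → E} (hf : AEStronglyMeasurable f μ) {s t a b : ℝ}
    (hs : 0 < s) (ht : 0 < t) (ha : 0 ≤ a) (hb : 0 ≤ b) (hab : a + b = 1) :
    eLpNorm f (ENNReal.ofReal (a * s + b * t)⁻¹) μ ≤
      eLpNorm f (ENNReal.ofReal s⁻¹) μ ^ a * eLpNorm f (ENNReal.ofReal t⁻¹) μ ^ b := by
  have hu : 0 < a * s + b * t := convex_Ioi (0 : ℝ) hs ht ha hb hab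
  set u := a * s + b * t
  have hne : ∀ {v : ℝ}, 0 < v → ENNReal.ofReal v⁻¹ ≠ 0 := fun hv => by simpa using hv
  rw [eLpNorm_eq_lintegral_rpow_enorm_toReal (hne hu) ENNReal.ofReal_ne_top,
    eLpNorm_eq_lintegral_rpow_enorm_toReal (hne hs) ENNReal.ofReal_ne_top,
    eLpNorm_eq_lintegral_rpow_enorm_toReal (hne ht) ENNReal.ofReal_ne_top]
  simp only [ENNReal.toReal_ofReal (inv_nonneg.2 hu.le), ENNReal.toReal_ofReal (inv_nonneg.2 hs.le),
    ENNReal.toReal_ofReal (inv_nonneg.2 ht.le), one_div, inv_inv]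
  -- Hölder with exponents `u / (a s)` and `u / (b t)`, applied to `‖f‖^(1/s)` and `‖f‖^(1/t)`.
  have hA : 0 ≤ a * s / u := by positivity
  have hB : 0 ≤ b * t / u := by positivity
  have hAB : a * s / u + b * t / u = 1 := by field
  have hpt : ∀ x, ‖f x‖ₑ ^ u⁻¹ = (‖f x‖ₑ ^ s⁻¹) ^ (a * s / u) * (‖f x‖ₑ ^ t⁻¹) ^ (b * t / u) := by
    intro x
    rw [← ENNReal.rpow_mul, ← ENNReal.rpow_mul, ← ENNReal.rpow_add_of_nonneg _ _ (by positivity)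
      (by positivity)]
    congr 1
    field_simp
    linarith
  have holder := ENNReal.lintegral_mul_norm_pow_le (μ := μ) (hf.enorm.pow_const s⁻¹)
    (hf.enorm.pow_const t⁻¹) hA hB hAB
  simp_rw [← hpt] at holder
  calc (∫⁻ x, ‖f x‖ₑ ^ u⁻¹ ∂μ) ^ u
      ≤ ((∫⁻ x, ‖f x‖ₑ ^ s⁻¹ ∂μ) ^ (a * s / u) * (∫⁻ x, ‖f x‖ₑ ^ t⁻¹ ∂μ) ^ (b * t / u)) ^ u :=
        ENNReal.rpow_le_rpow holder hu.le
    _ = _ := by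
        rw [ENNReal.mul_rpow_of_nonneg _ _ hu.le, ← ENNReal.rpow_mul, ← ENNReal.rpow_mul,
          ← ENNReal.rpow_mul, ← ENNReal.rpow_mul]
        congr 2 <;> field

section LogLpNorm

variable {X : Type*} [MeasurableSpace X] {μ : Measure X} {φ : X → ℝ} {p₁ p₂ : ℝ}

noncomputable def logLpN (μ : Measure X) (φ : X → ℝ) (s : ℝ) : ℝ :=
  Real.log (lpN μ s⁻¹ φ)

lemma lpN_inv_pos (hp₁ : 0 < p₁) (hp₂ : 0 < p₂) (hm₁ : MemLp φ (ENNReal.ofReal p₁) μ)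
    (hm₂ : MemLp φ (ENNReal.ofReal p₂) μ) (h0 : eLpNorm φ (ENNReal.ofReal p₁) μ ≠ 0)
    {s : ℝ} (hs : s ∈ Icc p₂⁻¹ p₁⁻¹) : 0 < lpN μ s⁻¹ φ := by
  obtain ⟨a, b, ha, hb, hab, rfl⟩ : s ∈ segment ℝ p₂⁻¹ p₁⁻¹ := by
    rwa [segment_eq_Icc (hs.1.trans hs.2)]
  have hle := eLpNorm_ofReal_inv_add_le hm₁.1 (inv_pos.2 hp₂) (inv_pos.2 hp₁) ha hb hab
  rw [inv_inv, inv_inv] at hle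
  refine ENNReal.toReal_pos ?_ (ne_top_of_le_ne_top ?_ hle)
  · have hs0 : 0 < a * p₂⁻¹ + b * p₁⁻¹ := (inv_pos.2 hp₂).trans_le hs.1
    rw [Ne, eLpNorm_eq_zero_iff hm₁.1 (by simpa using hs0)]
    rwa [Ne, eLpNorm_eq_zero_iff hm₁.1 (by simpa using hp₁)] at h0
  · exact ENNReal.mul_ne_top (ENNReal.rpow_ne_top_of_nonneg ha hm₂.2.ne)
      (ENNReal.rpow_ne_top_of_nonneg hb hm₁.2.ne)

lemma convexOn_logLpN (hp₁ : 0 < p₁) (hp₂ : 0 < p₂) (hm₁ : MemLp φ (ENNReal.ofReal p₁) μ)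
    (hm₂ : MemLp φ (ENNReal.ofReal p₂) μ) (h0 : eLpNorm φ (ENNReal.ofReal p₁) μ ≠ 0) :
    ConvexOn ℝ (Icc p₂⁻¹ p₁⁻¹) (logLpN μ φ) := by
  refine ⟨convex_Icc _ _, fun s hs t ht a b ha hb hab => ?_⟩
  have hpos := fun {s} hs => lpN_inv_pos hp₁ hp₂ hm₁ hm₂ h0 (s := s) hs
  have hcomb : a • s + b • t ∈ Icc p₂⁻¹ p₁⁻¹ := convex_Icc _ _ hs ht ha hb hab
  have hle := eLpNorm_ofReal_inv_add_le hm₁.1 ((inv_pos.2 hp₂).trans_le hs.1)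
    ((inv_pos.2 hp₂).trans_le ht.1) ha hb hab
  have hreal : lpN μ (a * s + b * t)⁻¹ φ ≤ lpN μ s⁻¹ φ ^ a * lpN μ t⁻¹ φ ^ b := by
    have hfin : eLpNorm φ (ENNReal.ofReal s⁻¹) μ ^ a * eLpNorm φ (ENNReal.ofReal t⁻¹) μ ^ b ≠ ⊤ :=
      ENNReal.mul_ne_top
        (ENNReal.rpow_ne_top_of_nonneg ha (ENNReal.toReal_pos_iff.1 (hpos hs)).2.ne)
        (ENNReal.rpow_ne_top_of_nonneg hb (ENNReal.toReal_pos_iff.1 (hpos ht)).2.ne)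
    simpa [lpN, ENNReal.toReal_mul, ENNReal.toReal_rpow] using ENNReal.toReal_mono hfin hle
  simp only [logLpN, smul_eq_mul] at hcomb ⊢
  calc Real.log (lpN μ (a * s + b * t)⁻¹ φ)
      ≤ Real.log (lpN μ s⁻¹ φ ^ a * lpN μ t⁻¹ φ ^ b) := Real.log_le_log (hpos hcomb) hreal
    _ = a * Real.log (lpN μ s⁻¹ φ) + b * Real.log (lpN μ t⁻¹ φ) := by
      rw [Real.log_mul (by positivity [hpos hs]) (by positivity [hpos ht]),
        Real.log_rpow (hpos hs), Real.log_rpow (hpos ht)]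

end LogLpNorm

section InterpolationDefect

variable {X : Type*} [MeasurableSpace X] {μ : Measure X} {φ : X → ℝ} {p₁ p p₂ r : ℝ}

noncomputable def interpQuotient (μ : Measure X) (p₁ p₂ : ℝ) (φ : X → ℝ) (r : ℝ) : ℝ :=
  lpN μ p₁ φ ^ th1 p₁ p₂ r * lpN μ p₂ φ ^ th2 p₁ p₂ r / lpN μ r φ

lemma interpDefect_eq_sSup_image :
    interpDefect μ p₁ p₂ φ = sSup (interpQuotient μ p₁ p₂ φ '' Icc p₁ p₂) := by
  simp only [interpDefect, interpQuotient, Set.image, eq_comm]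

noncomputable def interpGap (μ : Measure X) (p₁ p₂ : ℝ) (φ : X → ℝ) (s : ℝ) : ℝ :=
  th1 p₁ p₂ s⁻¹ * logLpN μ φ p₁⁻¹ + th2 p₁ p₂ s⁻¹ * logLpN μ φ p₂⁻¹ - logLpN μ φ s

lemma interpGap_inv_left (h : p₁ ≠ p₂) : interpGap μ p₁ p₂ φ p₁⁻¹ = 0 := by
  have h' : p₁⁻¹ - p₂⁻¹ ≠ 0 := sub_ne_zero.2 (inv_injective.ne h)
  simp [interpGap, th1, th2, div_self h']

lemma interpGap_inv_right (h : p₁ ≠ p₂) : interpGap μ p₁ p₂ φ p₂⁻¹ = 0 := by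
  have h' : p₁⁻¹ - p₂⁻¹ ≠ 0 := sub_ne_zero.2 (inv_injective.ne h)
  simp [interpGap, th1, th2, div_self h']

lemma concaveOn_interpGap (hp₁ : 0 < p₁) (hp₂ : 0 < p₂) (hm₁ : MemLp φ (ENNReal.ofReal p₁) μ)
    (hm₂ : MemLp φ (ENNReal.ofReal p₂) μ) (h0 : eLpNorm φ (ENNReal.ofReal p₁) μ ≠ 0) :
    ConcaveOn ℝ (Icc p₂⁻¹ p₁⁻¹) (interpGap μ p₁ p₂ φ) := by
  have chord : ConcaveOn ℝ (Icc p₂⁻¹ p₁⁻¹)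
      fun s => th1 p₁ p₂ s⁻¹ * logLpN μ φ p₁⁻¹ + th2 p₁ p₂ s⁻¹ * logLpN μ φ p₂⁻¹ := by
    refine ⟨convex_Icc _ _, fun s _ t _ a b _ _ hab => le_of_eq ?_⟩
    obtain rfl : b = 1 - a := by linarith
    simp only [th1, th2, one_div, inv_inv, smul_eq_mul]
    ring
  exact chord.sub (convexOn_logLpN hp₁ hp₂ hm₁ hm₂ h0)

lemma lpN_pos (hp₁ : 0 < p₁) (hm₁ : MemLp φ (ENNReal.ofReal p₁) μ)
    (hm₂ : MemLp φ (ENNReal.ofReal p₂) μ) (h0 : eLpNorm φ (ENNReal.ofReal p₁) μ ≠ 0)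
    (hr : r ∈ Icc p₁ p₂) : 0 < lpN μ r φ := by
  have hr₀ : 0 < r := hp₁.trans_le hr.1
  simpa using lpN_inv_pos hp₁ (hr₀.trans_le hr.2) hm₁ hm₂ h0
    ⟨inv_anti₀ hr₀ hr.2, inv_anti₀ hp₁ hr.1⟩

lemma interpQuotient_eq_exp (hp₁ : 0 < p₁) (hm₁ : MemLp φ (ENNReal.ofReal p₁) μ)
    (hm₂ : MemLp φ (ENNReal.ofReal p₂) μ) (h0 : eLpNorm φ (ENNReal.ofReal p₁) μ ≠ 0)
    (hr : r ∈ Icc p₁ p₂) :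
    interpQuotient μ p₁ p₂ φ r = Real.exp (interpGap μ p₁ p₂ φ r⁻¹) := by
  have hpos := fun {r} hr => lpN_pos (r := r) hp₁ hm₁ hm₂ h0 hr
  have hP₁ := hpos (left_mem_Icc.2 (hr.1.trans hr.2))
  have hP₂ := hpos (right_mem_Icc.2 (hr.1.trans hr.2))
  have hQ : 0 < interpQuotient μ p₁ p₂ φ r := by unfold interpQuotient; positivity [hpos hr]
  rw [← Real.exp_log hQ, interpQuotient, Real.log_div (by positivity) (hpos hr).ne',
    Real.log_mul (by positivity) (by positivity), Real.log_rpow hP₁,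
    Real.log_rpow hP₂]
  simp only [interpGap, logLpN, inv_inv]

noncomputable def defectExponent (p₁ p p₂ : ℝ) : ℝ :=
  max ((p₁⁻¹ - p₂⁻¹) / (p₁⁻¹ - p⁻¹)) ((p₁⁻¹ - p₂⁻¹) / (p⁻¹ - p₂⁻¹))

lemma one_le_defectExponent (hp₁ : 0 < p₁) (hp : p ∈ Ioo p₁ p₂) : 1 ≤ defectExponent p₁ p p₂ := by
  have hp₀ : 0 < p := hp₁.trans hp.1
  have h₁ : p⁻¹ < p₁⁻¹ := inv_strictAnti₀ hp₁ hp.1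
  have h₂ : p₂⁻¹ < p⁻¹ := inv_strictAnti₀ hp₀ hp.2
  exact le_max_of_le_left ((one_le_div (sub_pos.2 h₁)).2 (by linarith))

lemma interpQuotient_le_rpow (hp₁ : 0 < p₁) (hp : p ∈ Ioo p₁ p₂)
    (hm₁ : MemLp φ (ENNReal.ofReal p₁) μ) (hm₂ : MemLp φ (ENNReal.ofReal p₂) μ)
    (h0 : eLpNorm φ (ENNReal.ofReal p₁) μ ≠ 0) (hr : r ∈ Icc p₁ p₂) :
    interpQuotient μ p₁ p₂ φ r ≤ interpQuotient μ p₁ p₂ φ p ^ defectExponent p₁ p p₂ := by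
  have hp₀ : 0 < p := hp₁.trans hp.1
  have hr₀ : 0 < r := hp₁.trans_le hr.1
  have hne : p₁ ≠ p₂ := (hp.1.trans hp.2).ne
  rw [interpQuotient_eq_exp hp₁ hm₁ hm₂ h0 hr,
    interpQuotient_eq_exp hp₁ hm₁ hm₂ h0 (Ioo_subset_Icc_self hp), ← Real.exp_mul, mul_comm]
  exact Real.exp_le_exp.2 <| (concaveOn_interpGap hp₁ (hp₀.trans hp.2) hm₁ hm₂ h0).le_max_div_mul
    (interpGap_inv_right hne).ge (interpGap_inv_left hne).ge
    ⟨inv_strictAnti₀ hp₀ hp.2, inv_strictAnti₀ hp₁ hp.1⟩ ⟨inv_anti₀ hr₀ hr.2, inv_anti₀ hp₁ hr.1⟩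

lemma one_le_interpQuotient (hp₁ : 0 < p₁) (hp₁₂ : p₁ < p₂) (hm₁ : MemLp φ (ENNReal.ofReal p₁) μ)
    (hm₂ : MemLp φ (ENNReal.ofReal p₂) μ) (h0 : eLpNorm φ (ENNReal.ofReal p₁) μ ≠ 0)
    (hr : r ∈ Icc p₁ p₂) : 1 ≤ interpQuotient μ p₁ p₂ φ r := by
  have hp₂ : 0 < p₂ := hp₁.trans hp₁₂
  have hr₀ : 0 < r := hp₁.trans_le hr.1
  have h : p₂⁻¹ ≤ p₁⁻¹ := inv_anti₀ hp₁ hp₁₂.le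
  rw [interpQuotient_eq_exp hp₁ hm₁ hm₂ h0 hr, Real.one_le_exp_iff]
  refine (le_min (interpGap_inv_right hp₁₂.ne).ge (interpGap_inv_left hp₁₂.ne).ge).trans <|
    (concaveOn_interpGap hp₁ hp₂ hm₁ hm₂ h0).ge_on_segment (left_mem_Icc.2 h) (right_mem_Icc.2 h) ?_
  rw [segment_eq_Icc h]
  exact ⟨inv_anti₀ hr₀ hr.2, inv_anti₀ hp₁ hr.1⟩

lemma interpDefect_mem_Icc (hp₁ : 0 < p₁) (hp : p ∈ Ioo p₁ p₂)
    (hm₁ : MemLp φ (ENNReal.ofReal p₁) μ) (hm₂ : MemLp φ (ENNReal.ofReal p₂) μ)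
    (h0 : eLpNorm φ (ENNReal.ofReal p₁) μ ≠ 0) :
    interpDefect μ p₁ p₂ φ ∈
      Icc (interpQuotient μ p₁ p₂ φ p) (interpQuotient μ p₁ p₂ φ p ^ defectExponent p₁ p p₂) := by
  have hbound : ∀ q ∈ interpQuotient μ p₁ p₂ φ '' Icc p₁ p₂,
      q ≤ interpQuotient μ p₁ p₂ φ p ^ defectExponent p₁ p p₂ := by
    rintro _ ⟨r, hr, rfl⟩
    exact interpQuotient_le_rpow hp₁ hp hm₁ hm₂ h0 hr
  rw [interpDefect_eq_sSup_image]
  exact ⟨le_csSup ⟨_, hbound⟩ (mem_image_of_mem _ (Ioo_subset_Icc_self hp)),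
    csSup_le ((nonempty_Icc.2 (hp.1.trans hp.2).le).image _) hbound⟩

end InterpolationDefect

theorem stmt7_general {X : Type*} [MeasurableSpace X] (μ : Measure X)
    (p₁ p p₂ : ℝ) (h1 : 1 ≤ p₁) (h12 : p₁ < p) (h2p : p < p₂) :
    ∃ C : ℝ, 1 ≤ C ∧
      ((∀ φ : X → ℝ, MemLp φ (ENNReal.ofReal p₁) μ → MemLp φ (ENNReal.ofReal p₂) μ →
          eLpNorm φ (ENNReal.ofReal p₁) μ ≠ 0 →
          (lpN μ p₁ φ ^ th1 p₁ p₂ p * lpN μ p₂ φ ^ th2 p₁ p₂ p / lpN μ p φ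
              ≤ interpDefect μ p₁ p₂ φ
            ∧ interpDefect μ p₁ p₂ φ
              ≤ (lpN μ p₁ φ ^ th1 p₁ p₂ p * lpN μ p₂ φ ^ th2 p₁ p₂ p / lpN μ p φ) ^ C))
      ∧
      (∀ φs : ℕ → X → ℝ,
          (∀ n, MemLp (φs n) (ENNReal.ofReal p₁) μ) →
          (∀ n, MemLp (φs n) (ENNReal.ofReal p₂) μ) →
          (∀ n, eLpNorm (φs n) (ENNReal.ofReal p₁) μ ≠ 0) →
          ((∃ B : ℝ, ∀ n,
              lpN μ p₁ (φs n) ^ th1 p₁ p₂ p * lpN μ p₂ (φs n) ^ th2 p₁ p₂ p / lpN μ p (φs n)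
                ≤ B)
            ↔ (∃ B : ℝ, ∀ n, interpDefect μ p₁ p₂ (φs n) ≤ B)))) := by
  have hp₁ : 0 < p₁ := by linarith
  have hp : p ∈ Ioo p₁ p₂ := ⟨h12, h2p⟩
  have hC := one_le_defectExponent hp₁ hp
  refine ⟨defectExponent p₁ p p₂, hC, fun φ hm₁ hm₂ h0 => interpDefect_mem_Icc hp₁ hp hm₁ hm₂ h0,
    fun φs hm₁ hm₂ h0 => ⟨?_, ?_⟩⟩
  · rintro ⟨B, hB⟩
    refine ⟨max B 1 ^ defectExponent p₁ p p₂, fun n => ?_⟩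
    refine (interpDefect_mem_Icc hp₁ hp (hm₁ n) (hm₂ n) (h0 n)).2.trans ?_
    exact Real.rpow_le_rpow
      (zero_le_one.trans (one_le_interpQuotient hp₁ (h12.trans h2p) (hm₁ n) (hm₂ n) (h0 n)
        (Ioo_subset_Icc_self hp)))
      ((hB n).trans (le_max_left _ _)) (zero_le_one.trans hC)
  · rintro ⟨B, hB⟩
    exact ⟨B, fun n => (interpDefect_mem_Icc hp₁ hp (hm₁ n) (hm₂ n) (h0 n)).1.trans (hB n)⟩

/-- Lemma 14.2: the interpolation defect is controlled by the value of the
defect at one interior exponent `p`, with a constant depending only on `p₁, p, p₂`; in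
particular uniform boundedness of the one-point quotients for a sequence is equivalent to
uniform boundedness of the interpolation defects. -/
theorem stmt7 {X : Type*} [MeasurableSpace X] (μ : Measure X) [SigmaFinite μ]
    (p₁ p p₂ : ℝ) (h1 : 1 ≤ p₁) (h12 : p₁ < p) (h2p : p < p₂) :
    ∃ C : ℝ, 1 ≤ C ∧
      ((∀ φ : X → ℝ, MemLp φ (ENNReal.ofReal p₁) μ → MemLp φ (ENNReal.ofReal p₂) μ →
          eLpNorm φ (ENNReal.ofReal p₁) μ ≠ 0 →
          (lpN μ p₁ φ ^ th1 p₁ p₂ p * lpN μ p₂ φ ^ th2 p₁ p₂ p / lpN μ p φ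
              ≤ interpDefect μ p₁ p₂ φ
            ∧ interpDefect μ p₁ p₂ φ
              ≤ (lpN μ p₁ φ ^ th1 p₁ p₂ p * lpN μ p₂ φ ^ th2 p₁ p₂ p / lpN μ p φ) ^ C))
      ∧
      (∀ φs : ℕ → X → ℝ,
          (∀ n, MemLp (φs n) (ENNReal.ofReal p₁) μ) →
          (∀ n, MemLp (φs n) (ENNReal.ofReal p₂) μ) →
          (∀ n, eLpNorm (φs n) (ENNReal.ofReal p₁) μ ≠ 0) →
          ((∃ B : ℝ, ∀ n,
              lpN μ p₁ (φs n) ^ th1 p₁ p₂ p * lpN μ p₂ (φs n) ^ th2 p₁ p₂ p / lpN μ p (φs n)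
                ≤ B)
            ↔ (∃ B : ℝ, ∀ n, interpDefect μ p₁ p₂ (φs n) ≤ B)))) :=
  stmt7_general μ p₁ p p₂ h1 h12 h2p
end

section
/- Let d ≥ 2. For every integer α ≥ 2 there exists a constant C(d, α) ≥ 1 such that for all integers n₁ ≥ n₂ ≥ ⋯ ≥ n_α ≥ 1: (1/C(d,α)) · (n₂ ⋯ n_α)^{(d−1)/2} ≤ ∫_{S^d} |Y_{n₁}(x) ⋯ Y_{n_α}(x)|² dμ_d(x) ≤ C(d,α) · (n₂ ⋯ n_α)^{(d−1)/2}, and likewise (1/C(d,α)) · (n₂ ⋯ n_α)^{(d−1)/2} ≤ ∫_{S^d} |Ỹ_{n₁}(x) ⋯ Ỹ_{n_α}(x)|² dμ_d(x) ≤ C(d,α) · (n₂ ⋯ n_α)^{(d−1)/2}. -/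
open MeasureTheory
open scoped ENNReal NNReal

/-- The surface measure on the unit sphere `S^d ⊂ ℝ^{d+1}`: the `d`-dimensional
Hausdorff measure on the sphere. -/
noncomputable def sphMeas (d : ℕ) :
    Measure (Metric.sphere (0 : EuclideanSpace ℝ (Fin (d + 1))) 1) :=
  μH[d]

/-- The highest-weight spherical harmonic `Y_n(x) = c (x₁ + i x₂)^n` with a given
normalizing constant `c`. -/
noncomputable def Yhw (d : ℕ) (c : ℝ) (n : ℕ)
    (x : Metric.sphere (0 : EuclideanSpace ℝ (Fin (d + 1))) 1) : ℂ :=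
  (c : ℂ) * (((x : EuclideanSpace ℝ (Fin (d + 1))) 0 : ℂ)
      + Complex.I * ((x : EuclideanSpace ℝ (Fin (d + 1))) 1 : ℂ)) ^ n

/-- The truncated highest-weight function `Ỹ_n`. -/
noncomputable def Ytil (d n : ℕ)
    (x : Metric.sphere (0 : EuclideanSpace ℝ (Fin (d + 1))) 1) : ℝ :=
  if Real.arccos (Real.sqrt (((x : EuclideanSpace ℝ (Fin (d + 1))) 0) ^ 2
        + ((x : EuclideanSpace ℝ (Fin (d + 1))) 1) ^ 2)) ≤ 1 / Real.sqrt n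
  then (n : ℝ) ^ (((d : ℝ) - 1) / 4) else 0

/-!
On the sphere `|x₀ + i x₁|² = q := x₀² + x₁²`, so `|Y_{n₁} ⋯ Y_{n_α}|² = (c_{n₁} ⋯ c_{n_α})² q^N`
with `N = n₁ + ⋯ + n_α`, while `Ỹ_{n₁} ⋯ Ỹ_{n_α}` is `(n₁ ⋯ n_α)^{(d-1)/4}` times the indicator of
the smallest cap `{arccos √q ≤ n₁^{-1/2}}`. The cap of `n` lies between the bands `{q ≥ 1 - s}` for
`s = 1/(8n)` and `s = 1/n`, and such a band has measure `≍ s^{(d-1)/2}`: from above because it is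
covered by four Lipschitz graphs over boxes of volume `≍ s^{(d-1)/2}` in coordinate hyperplanes, from
below because its 1-Lipschitz projection forgetting `x₁` contains such a box. Cutting `q^m` into
the layers `k ≤ m (1 - q) < k + 1`, on which `q^m ≤ e^{-k}`, gives `∫ q^m ≍ m^{-(d-1)/2}`, hence
`c_n² ≍ n^{(d-1)/2}`; as `n₁ ≤ N ≤ α n₁`, both integrals are `≍ (n₁ ⋯ n_α)^{(d-1)/2} n₁^{-(d-1)/2}`.
-/

namespace HighestWeight

noncomputable section

local notation "𝔼" d:max => EuclideanSpace ℝ (Fin (d + 1))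
local notation "𝕊" d:max => Metric.sphere (0 : EuclideanSpace ℝ (Fin (d + 1))) 1

variable {d : ℕ}

def planeNormSq (x : 𝔼 d) : ℝ := x 0 ^ 2 + x 1 ^ 2

lemma planeNormSq_nonneg (x : 𝔼 d) : 0 ≤ planeNormSq x := by
  unfold planeNormSq; positivity

lemma sum_sq_eq_one_of_mem_sphere {x : 𝔼 d} (hx : x ∈ 𝕊 d) : ∑ i, x i ^ 2 = 1 := by
  rw [← EuclideanSpace.real_norm_sq_eq, mem_sphere_zero_iff_norm.1 hx, one_pow]

lemma sum_sq_le_one_of_mem_sphere {x : 𝔼 d} (hx : x ∈ 𝕊 d) (s : Finset (Fin (d + 1))) :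
    ∑ i ∈ s, x i ^ 2 ≤ 1 :=
  sum_sq_eq_one_of_mem_sphere hx ▸
    Finset.sum_le_sum_of_subset_of_nonneg (Finset.subset_univ s) fun _ _ _ => sq_nonneg _

lemma zero_ne_one_of_one_le (hd : 1 ≤ d) : (0 : Fin (d + 1)) ≠ 1 := by
  simp [Fin.ext_iff, Nat.mod_eq_of_lt (by omega : 1 < d + 1)]

lemma sub_one_div_two_nonneg (hd : 1 ≤ d) : 0 ≤ ((d : ℝ) - 1) / 2 :=
  div_nonneg (sub_nonneg.2 (by exact_mod_cast hd)) zero_le_two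

lemma planeNormSq_le_one (hd : 1 ≤ d) {x : 𝔼 d} (hx : x ∈ 𝕊 d) : planeNormSq x ≤ 1 := by
  simpa [planeNormSq, Finset.sum_pair (zero_ne_one_of_one_le hd)] using
    sum_sq_le_one_of_mem_sphere hx {0, 1}

lemma sq_le_one_sub_planeNormSq {x : 𝔼 d} (hx : x ∈ 𝕊 d) {k : Fin (d + 1)} (hk : 2 ≤ (k : ℕ)) :
    x k ^ 2 ≤ 1 - planeNormSq x := by
  have h := sum_sq_le_one_of_mem_sphere hx {0, 1, k}
  have h1 : 1 < d + 1 := by omega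
  rw [Finset.sum_insert (by simp [Fin.ext_iff, Nat.mod_eq_of_lt h1]; omega),
    Finset.sum_pair (by simp [Fin.ext_iff, Nat.mod_eq_of_lt h1]; omega)] at h
  unfold planeNormSq; linarith

lemma two_le_succAbove {i : Fin (d + 1)} (hi : (i : ℕ) ≤ 1) {j : Fin d} (hj : (j : ℕ) ≠ 0) :
    2 ≤ (i.succAbove j : ℕ) := by
  rw [Fin.succAbove_of_le_castSucc i j (by rw [Fin.le_def, Fin.val_castSucc]; omega), Fin.val_succ]
  omega

def graphDomain (d : ℕ) : Set (Fin d → ℝ) := {v | ∑ j, v j ^ 2 ≤ 1 - 1 / (d + 1)}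

def graphHeight (v : Fin d → ℝ) : ℝ := √(1 - ∑ j, v j ^ 2)

lemma graphHeight_sq {v : Fin d → ℝ} (hv : ∑ j, v j ^ 2 ≤ 1) :
    graphHeight v ^ 2 = 1 - ∑ j, v j ^ 2 :=
  Real.sq_sqrt (sub_nonneg.2 hv)

def graphMap (i : Fin (d + 1)) (σ : ℝ) (v : Fin d → ℝ) : 𝔼 d :=
  WithLp.toLp 2 (i.insertNth (σ * graphHeight v) v)

@[simp] lemma graphMap_apply_self (i : Fin (d + 1)) (σ : ℝ) (v : Fin d → ℝ) :
    graphMap i σ v i = σ * graphHeight v := by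
  simp [graphMap]

@[simp] lemma graphMap_apply_succAbove (i : Fin (d + 1)) (σ : ℝ) (v : Fin d → ℝ) (j : Fin d) :
    graphMap i σ v (i.succAbove j) = v j := by
  simp [graphMap]

lemma removeNth_graphMap (i : Fin (d + 1)) (σ : ℝ) (v : Fin d → ℝ) :
    i.removeNth (graphMap i σ v).ofLp = v := by
  ext j; simp [Fin.removeNth_apply]

lemma graphMap_mem_sphere (i : Fin (d + 1)) {σ : ℝ} (hσ : |σ| = 1) {v : Fin d → ℝ}
    (hv : ∑ j, v j ^ 2 ≤ 1) : graphMap i σ v ∈ 𝕊 d := by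
  rw [mem_sphere_zero_iff_norm, EuclideanSpace.norm_eq, Real.sqrt_eq_one,
    Fin.sum_univ_succAbove _ i]
  simp only [Real.norm_eq_abs, sq_abs, graphMap_apply_self, graphMap_apply_succAbove, mul_pow,
    ← sq_abs σ, hσ, graphHeight_sq hv]
  ring

lemma sum_sq_removeNth {x : 𝔼 d} (hx : x ∈ 𝕊 d) (i : Fin (d + 1)) :
    ∑ j, i.removeNth x.ofLp j ^ 2 = 1 - x i ^ 2 := by
  rw [← sum_sq_eq_one_of_mem_sphere hx, Fin.sum_univ_succAbove _ i]
  simp [Fin.removeNth_apply]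

lemma graphMap_removeNth {x : 𝔼 d} (hx : x ∈ 𝕊 d) (i : Fin (d + 1)) {σ : ℝ}
    (hσ : σ * |x i| = x i) : graphMap i σ (i.removeNth x.ofLp) = x := by
  ext k
  rw [graphMap, PiLp.toLp_apply, graphHeight, sum_sq_removeNth hx, sub_sub_cancel,
    Real.sqrt_sq_eq_abs, hσ, Fin.insertNth_self_removeNth]

lemma abs_sqrt_sub_sqrt_le {a b c : ℝ} (hc : 0 < c) (hc1 : c ≤ 1) (ha : c ≤ a) (hb : c ≤ b) :
    |√a - √b| ≤ |a - b| / (2 * c) := by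
  have hcc : c ≤ √c := Real.le_sqrt_of_sq_le (by nlinarith)
  have hca := Real.sqrt_le_sqrt ha
  have hcb := Real.sqrt_le_sqrt hb
  rw [le_div_iff₀ (by positivity), ← Real.sq_sqrt (hc.le.trans ha), ← Real.sq_sqrt (hc.le.trans hb),
    sq_sub_sq, abs_mul, Real.sq_sqrt (hc.le.trans ha), Real.sq_sqrt (hc.le.trans hb), mul_comm]
  gcongr
  rw [abs_of_nonneg (by positivity)]
  linarith

lemma abs_sum_sq_sub_sum_sq_le {v w : Fin d → ℝ} (hv : ∀ j, |v j| ≤ 1) (hw : ∀ j, |w j| ≤ 1) :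
    |∑ j, v j ^ 2 - ∑ j, w j ^ 2| ≤ 2 * d * dist v w := by
  rw [← Finset.sum_sub_distrib]
  refine (Finset.abs_sum_le_sum_abs _ _).trans ?_
  calc ∑ j, |v j ^ 2 - w j ^ 2| ≤ ∑ _j : Fin d, 2 * dist v w := by
        gcongr with j
        rw [sq_sub_sq, abs_mul]
        have hvw : |v j - w j| ≤ dist v w := by simpa [Real.dist_eq] using dist_le_pi_dist v w j
        have hsum : |v j + w j| ≤ 2 := (abs_add_le _ _).trans (by linarith [hv j, hw j])
        nlinarith [abs_nonneg (v j - w j), abs_nonneg (v j + w j)]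
    _ = 2 * d * dist v w := by simp; ring

lemma abs_le_one_of_mem_graphDomain {v : Fin d → ℝ} (hv : v ∈ graphDomain d) (j : Fin d) :
    |v j| ≤ 1 := by
  have hj : v j ^ 2 ≤ ∑ k, v k ^ 2 :=
    Finset.single_le_sum (f := fun k => v k ^ 2) (fun _ _ => sq_nonneg _) (Finset.mem_univ j)
  have : (0 : ℝ) ≤ 1 / (d + 1) := by positivity
  exact (sq_le_one_iff_abs_le_one _).1 (by linarith [hv.out])

lemma abs_graphHeight_sub_le {v w : Fin d → ℝ} (hv : v ∈ graphDomain d) (hw : w ∈ graphDomain d) :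
    |graphHeight v - graphHeight w| ≤ d * (d + 1) * dist v w := by
  have hc1 : 1 / (d + 1 : ℝ) ≤ 1 := by
    rw [div_le_one (by positivity)]; linarith [d.cast_nonneg (α := ℝ)]
  refine (abs_sqrt_sub_sqrt_le (by positivity) hc1 (by linarith [hv.out])
    (by linarith [hw.out])).trans ?_
  rw [sub_sub_sub_cancel_left, abs_sub_comm, div_le_iff₀ (by positivity)]
  refine (abs_sum_sq_sub_sum_sq_le (abs_le_one_of_mem_graphDomain hv)
    (abs_le_one_of_mem_graphDomain hw)).trans_eq ?_
  field_simp

lemma lipschitzOnWith_graphMap (i : Fin (d + 1)) {σ : ℝ} (hσ : |σ| = 1) :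
    LipschitzOnWith ((d + 1) ^ 2 : ℕ) (graphMap i σ) (graphDomain d) := by
  rw [lipschitzOnWith_iff_dist_le_mul]
  intro v hv w hw
  set D := dist v w
  have hcoord : ∑ j, (v j - w j) ^ 2 ≤ d * D ^ 2 := by
    calc ∑ j, (v j - w j) ^ 2 ≤ ∑ _j : Fin d, D ^ 2 := Finset.sum_le_sum fun j _ => by
          rw [← sq_abs]
          exact pow_le_pow_left₀ (abs_nonneg _)
            (by simpa [Real.dist_eq] using dist_le_pi_dist v w j) 2
      _ = d * D ^ 2 := by simp
  have hheight := pow_le_pow_left₀ (abs_nonneg _) (abs_graphHeight_sub_le hv hw) 2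
  rw [sq_abs] at hheight
  have hsq : dist (graphMap i σ v) (graphMap i σ w) ^ 2 ≤ ((d + 1) ^ 2 * D) ^ 2 := by
    rw [EuclideanSpace.dist_eq, Real.sq_sqrt (by positivity), Fin.sum_univ_succAbove _ i]
    simp only [graphMap_apply_self, graphMap_apply_succAbove, Real.dist_eq, sq_abs, ← mul_sub,
      mul_pow, ← sq_abs σ, hσ, one_pow, one_mul]
    have hd0 := d.cast_nonneg (α := ℝ)
    nlinarith [mul_nonneg (mul_nonneg hd0 hd0) (sq_nonneg D), mul_nonneg hd0 (sq_nonneg D)]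
  push_cast
  exact le_of_sq_le_sq hsq (by positivity)

def dropCoord (i : Fin (d + 1)) (x : 𝕊 d) : Fin d → ℝ := i.removeNth (x : 𝔼 d).ofLp

lemma sphMeas_eq_hausdorffMeasure_image (B : Set (𝕊 d)) :
    sphMeas d B = μH[d] (Subtype.val '' B) :=
  (isometry_subtype_coe.hausdorffMeasure_image (Or.inl d.cast_nonneg) B).symm

lemma hausdorffMeasure_eq_volume : (μH[d] : Measure (Fin d → ℝ)) = volume := by
  simpa using hausdorffMeasure_pi_real (ι := Fin d)

lemma lipschitzWith_dropCoord (i : Fin (d + 1)) : LipschitzWith 1 (dropCoord (d := d) i) := by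
  refine LipschitzWith.of_dist_le_mul fun x y => ?_
  rw [NNReal.coe_one, one_mul, dist_pi_le_iff dist_nonneg]
  exact fun j => PiLp.dist_apply_le (x : 𝔼 d) y _

lemma volume_image_dropCoord_le (i : Fin (d + 1)) (B : Set (𝕊 d)) :
    volume (dropCoord i '' B) ≤ sphMeas d B := by
  simpa [sphMeas, ← hausdorffMeasure_eq_volume] using
    (lipschitzWith_dropCoord i).hausdorffMeasure_image_le d.cast_nonneg B

lemma hausdorffMeasure_image_graphMap_le (i : Fin (d + 1)) {σ : ℝ} (hσ : |σ| = 1)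
    {S : Set (Fin d → ℝ)} (hS : S ⊆ graphDomain d) :
    μH[d] (graphMap i σ '' S) ≤ (((d + 1) ^ 2 : ℕ) : ℝ≥0∞) ^ d * volume S := by
  simpa [← hausdorffMeasure_eq_volume] using
    ((lipschitzOnWith_graphMap i hσ).mono hS).hausdorffMeasure_image_le d.cast_nonneg

/-- The factor `2` counts the two sheets `xᵢ = ± graphHeight (removeNth i x)` of the sphere over
`graphDomain`. -/
lemma sphMeas_le_sum_volume_image_dropCoord {B : Set (𝕊 d)} {I : Finset (Fin (d + 1))}
    (hB : ∀ x ∈ B, ∃ i ∈ I, 1 / (d + 1) ≤ (x : 𝔼 d) i ^ 2) :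
    sphMeas d B ≤ ∑ i ∈ I, 2 * (((d + 1) ^ 2 : ℕ) : ℝ≥0∞) ^ d * volume (dropCoord i '' B) := by
  set S : Fin (d + 1) → Set (Fin d → ℝ) := fun i => graphDomain d ∩ dropCoord i '' B
  have hcover : Subtype.val '' B ⊆ ⋃ i ∈ I, (graphMap i 1 '' S i ∪ graphMap i (-1) '' S i) := by
    rintro _ ⟨x, hxB, rfl⟩
    obtain ⟨i, hiI, hxi⟩ := hB x hxB
    have hS : dropCoord i x ∈ S i := by
      refine ⟨?_, x, hxB, rfl⟩
      show ∑ j, dropCoord i x j ^ 2 ≤ 1 - 1 / (d + 1)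
      rw [dropCoord, sum_sq_removeNth x.2]
      linarith
    refine Set.mem_biUnion hiI ?_
    rcases le_or_gt 0 ((x : 𝔼 d) i) with hpos | hneg
    · exact Or.inl ⟨_, hS, graphMap_removeNth x.2 i (by rw [abs_of_nonneg hpos, one_mul])⟩
    · exact Or.inr ⟨_, hS, graphMap_removeNth x.2 i (by rw [abs_of_neg hneg]; ring)⟩
  have hpiece : ∀ i σ, |σ| = 1 → μH[d] (graphMap i σ '' S i) ≤
      (((d + 1) ^ 2 : ℕ) : ℝ≥0∞) ^ d * volume (dropCoord i '' B) := fun i σ hσ =>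
    (hausdorffMeasure_image_graphMap_le i hσ Set.inter_subset_left).trans
      (by gcongr; exact Set.inter_subset_right)
  rw [sphMeas_eq_hausdorffMeasure_image]
  refine (measure_mono hcover).trans ((measure_biUnion_finset_le I _).trans
    (Finset.sum_le_sum fun i _ => (measure_union_le _ _).trans ?_))
  rw [two_mul, add_mul]
  exact add_le_add (hpiece i 1 abs_one) (hpiece i (-1) (by simp))

lemma exists_sq_ge_of_mem_sphere {x : 𝔼 d} (hx : x ∈ 𝕊 d) : ∃ i, 1 / (d + 1) ≤ x i ^ 2 := by
  obtain ⟨i, -, hi⟩ := Finset.exists_le_of_sum_le (s := Finset.univ) (f := fun _ => 1 / (d + 1 : ℝ))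
    (g := fun i => x i ^ 2) Finset.univ_nonempty
    (by rw [sum_sq_eq_one_of_mem_sphere hx]
        simp [mul_inv_cancel₀ (by positivity : (d + 1 : ℝ) ≠ 0)])
  exact ⟨i, hi⟩

instance : IsFiniteMeasure (sphMeas d) := by
  refine ⟨(sphMeas_le_sum_volume_image_dropCoord (B := Set.univ) (I := Finset.univ)
    fun x _ => (exists_sq_ge_of_mem_sphere x.2).imp fun i hi => ⟨Finset.mem_univ i, hi⟩).trans_lt
      ?_⟩
  refine ENNReal.sum_lt_top.2 fun i _ => ENNReal.mul_lt_top (by simp [ENNReal.mul_lt_top]) ?_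
  refine (measure_mono ?_).trans_lt (measure_closedBall_lt_top (x := 0) (r := 1))
  rintro _ ⟨x, -, rfl⟩
  rw [mem_closedBall_zero_iff, pi_norm_le_iff_of_nonneg zero_le_one]
  intro j
  rw [Real.norm_eq_abs, ← sq_le_one_iff_abs_le_one]
  simpa [dropCoord, Fin.removeNth_apply] using sum_sq_le_one_of_mem_sphere x.2 {i.succAbove j}

def box (d : ℕ) (a t : ℝ) : Set (Fin d → ℝ) :=
  Set.Icc (-fun j : Fin d => if (j : ℕ) = 0 then a else t) fun j => if (j : ℕ) = 0 then a else t

lemma mem_box {a t : ℝ} {v : Fin d → ℝ} :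
    v ∈ box d a t ↔ ∀ j, |v j| ≤ if (j : ℕ) = 0 then a else t := by
  simp only [box, Set.mem_Icc, Pi.le_def, Pi.neg_apply, abs_le, ← forall_and, neg_le]

lemma volume_box (hd : 1 ≤ d) {a u : ℝ} (ha : 0 ≤ a) (hu : 0 ≤ u) :
    volume (box d a √u) = ENNReal.ofReal (2 * a * (4 * u) ^ (((d : ℝ) - 1) / 2)) := by
  obtain ⟨e, rfl⟩ : ∃ e, d = e + 1 := ⟨d - 1, by omega⟩
  have hsqrt : 2 * √u = √(4 * u) := by
    rw [Real.sqrt_mul zero_le_four, show (4 : ℝ) = 2 ^ 2 by norm_num, Real.sqrt_sq zero_le_two]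
  rw [box, Real.volume_Icc_pi, Fin.prod_univ_succ]
  simp only [Pi.neg_apply, sub_neg_eq_add, Fin.val_zero, Fin.val_succ, if_true,
    Nat.add_one_ne_zero, if_false, Finset.prod_const, Finset.card_univ, Fintype.card_fin]
  rw [← two_mul, ← two_mul, hsqrt, ← ENNReal.ofReal_pow (by positivity),
    ← ENNReal.ofReal_mul (by positivity), Nat.cast_add_one, add_sub_cancel_right,
    Real.rpow_div_two_eq_sqrt _ (by positivity), Real.rpow_natCast]

def band (d : ℕ) (s : ℝ) : Set (𝕊 d) := {x | 1 - s ≤ planeNormSq (x : 𝔼 d)}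

lemma image_dropCoord_band_subset {i : Fin (d + 1)} (hi : (i : ℕ) ≤ 1) (s : ℝ) :
    dropCoord i '' band d s ⊆ box d 1 √s := by
  rintro _ ⟨x, hx, rfl⟩
  refine mem_box.2 fun j => ?_
  split_ifs with hj
  · rw [← sq_le_one_iff_abs_le_one]
    simpa [dropCoord, Fin.removeNth_apply] using sum_sq_le_one_of_mem_sphere x.2 {i.succAbove j}
  · exact Real.abs_le_sqrt ((sq_le_one_sub_planeNormSq x.2 (two_le_succAbove hi hj)).trans
      (by linarith [hx.out]))

lemma exists_sq_ge_of_mem_band (hd : 2 ≤ d) {s : ℝ} (hs4 : s ≤ 1 / 4) {x : 𝕊 d}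
    (hx : x ∈ band d s) : ∃ i ∈ ({0, 1} : Finset (Fin (d + 1))), 1 / (d + 1) ≤ (x : 𝔼 d) i ^ 2 := by
  have hd3 : 1 / (d + 1 : ℝ) ≤ 3 / 8 := by
    rw [div_le_div_iff₀ (by positivity) (by norm_num)]
    linarith [show (2 : ℝ) ≤ d by exact_mod_cast hd]
  have hq : 3 / 4 ≤ planeNormSq (x : 𝔼 d) := by linarith [hx.out]
  unfold planeNormSq at hq
  rcases le_total ((x : 𝔼 d) 1 ^ 2) ((x : 𝔼 d) 0 ^ 2) with h | h
  · exact ⟨0, by simp, by linarith⟩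
  · exact ⟨1, by simp, by linarith⟩

lemma sphMeas_band_le (hd : 2 ≤ d) {s : ℝ} (hs : 0 ≤ s) (hs4 : s ≤ 1 / 4) :
    sphMeas d (band d s) ≤
      ENNReal.ofReal (8 * ((d + 1) ^ 2) ^ d * (4 * s) ^ (((d : ℝ) - 1) / 2)) := by
  have hbox : ∀ i ∈ ({0, 1} : Finset (Fin (d + 1))), volume (dropCoord i '' band d s) ≤
      ENNReal.ofReal (2 * 1 * (4 * s) ^ (((d : ℝ) - 1) / 2)) := by
    intro i hi
    have hi1 : (i : ℕ) ≤ 1 := by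
      rcases Finset.mem_insert.1 hi with rfl | hi
      · simp
      · simp [Finset.mem_singleton.1 hi, Nat.mod_eq_of_lt (by omega : 1 < d + 1)]
    rw [← volume_box (by omega) zero_le_one hs]
    exact measure_mono (image_dropCoord_band_subset hi1 s)
  refine (sphMeas_le_sum_volume_image_dropCoord fun _ hx =>
    exists_sq_ge_of_mem_band hd hs4 hx).trans
    ((Finset.sum_le_sum fun i hi => mul_le_mul_right (hbox i hi) _).trans_eq ?_)
  rw [Finset.sum_pair (zero_ne_one_of_one_le (by omega)), ← two_mul, ← ENNReal.ofReal_natCast,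
    ← ENNReal.ofReal_pow (by positivity), ← ENNReal.ofReal_ofNat 2,
    ← ENNReal.ofReal_mul (by positivity), ← ENNReal.ofReal_mul (by positivity),
    ← ENNReal.ofReal_mul (by positivity)]
  congr 1
  push_cast
  ring

lemma box_subset_image_dropCoord_band (hd : 1 ≤ d) {s : ℝ} (hs : 0 ≤ s) (hs2 : s ≤ 1 / 2) :
    box d (1 / 2) √(s / d) ⊆ dropCoord 1 '' band d s := by
  obtain ⟨e, rfl⟩ : ∃ e, d = e + 1 := ⟨d - 1, by omega⟩
  intro v hv
  have hv0 : v 0 ^ 2 ≤ 1 / 4 := by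
    have := (mem_box.1 hv 0)
    simp only [Fin.val_zero, if_true] at this
    nlinarith [abs_nonneg (v 0), sq_abs (v 0)]
  have htail : ∑ j : Fin e, v j.succ ^ 2 ≤ s := by
    calc ∑ j : Fin e, v j.succ ^ 2 ≤ ∑ _j : Fin e, s / (e + 1 : ℕ) := by
          refine Finset.sum_le_sum fun j _ => ?_
          have := mem_box.1 hv j.succ
          simp only [Fin.val_succ, Nat.add_one_ne_zero, if_false] at this
          rw [← sq_abs, ← Real.sq_sqrt (by positivity : 0 ≤ s / (e + 1 : ℕ))]
          exact pow_le_pow_left₀ (abs_nonneg _) this 2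
      _ ≤ s := by
          rw [Finset.sum_const, Finset.card_univ, Fintype.card_fin, nsmul_eq_mul, mul_div_assoc']
          rw [div_le_iff₀ (by positivity)]
          push_cast
          nlinarith
  have hsum : ∑ j, v j ^ 2 = v 0 ^ 2 + ∑ j : Fin e, v j.succ ^ 2 := Fin.sum_univ_succ _
  have hx := graphMap_mem_sphere 1 abs_one (v := v) (by linarith)
  refine ⟨⟨_, hx⟩, ?_, removeNth_graphMap 1 1 v⟩
  show 1 - s ≤ planeNormSq (graphMap 1 1 v)
  rw [planeNormSq, ← Fin.one_succAbove_zero, graphMap_apply_succAbove, graphMap_apply_self, one_mul,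
    graphHeight_sq (by linarith)]
  linarith

lemma ofReal_le_sphMeas_band (hd : 1 ≤ d) {s : ℝ} (hs : 0 ≤ s) (hs2 : s ≤ 1 / 2) :
    ENNReal.ofReal ((4 * s / d) ^ (((d : ℝ) - 1) / 2)) ≤ sphMeas d (band d s) := by
  calc ENNReal.ofReal ((4 * s / d) ^ (((d : ℝ) - 1) / 2)) = volume (box d (1 / 2) √(s / d)) := by
        rw [volume_box hd (by norm_num) (by positivity), mul_div_assoc]; norm_num
    _ ≤ volume (dropCoord 1 '' band d s) := measure_mono (box_subset_image_dropCoord_band hd hs hs2)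
    _ ≤ sphMeas d (band d s) := volume_image_dropCoord_le 1 _

lemma exists_sphMeas_band_le (hd : 2 ≤ d) : ∃ b : ℝ, 0 < b ∧ ∀ s : ℝ, 0 < s →
    sphMeas d (band d s) ≤ ENNReal.ofReal (b * s ^ (((d : ℝ) - 1) / 2)) := by
  set β := ((d : ℝ) - 1) / 2
  have hβ : 0 ≤ β := sub_one_div_two_nonneg (by omega)
  set T := (sphMeas d Set.univ).toReal
  have hT : 0 ≤ T := ENNReal.toReal_nonneg
  have hK : 0 < 8 * ((d + 1 : ℝ) ^ 2) ^ d := by positivity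
  refine ⟨(8 * ((d + 1) ^ 2) ^ d + T) * 4 ^ β, mul_pos (by linarith) (by positivity),
    fun s hs => ?_⟩
  rcases le_or_gt s (1 / 4) with hs4 | hs4
  · refine (sphMeas_band_le hd hs.le hs4).trans (ENNReal.ofReal_le_ofReal ?_)
    rw [Real.mul_rpow (by norm_num) hs.le]
    have : 0 ≤ T * 4 ^ β * s ^ β := by positivity
    nlinarith
  · have h4s : 1 ≤ (4 * s) ^ β := Real.one_le_rpow (by linarith) hβ
    calc sphMeas d (band d s) ≤ sphMeas d Set.univ := measure_mono (Set.subset_univ _)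
      _ = ENNReal.ofReal T := (ENNReal.ofReal_toReal (measure_ne_top _ _)).symm
      _ ≤ _ := by
        refine ENNReal.ofReal_le_ofReal ?_
        rw [mul_assoc, ← Real.mul_rpow (by norm_num) hs.le]
        have : 0 ≤ 8 * ((d + 1 : ℝ) ^ 2) ^ d * (4 * s) ^ β := by positivity
        nlinarith

lemma continuous_planeNormSq : Continuous fun x : 𝕊 d => planeNormSq (x : 𝔼 d) := by
  unfold planeNormSq; fun_prop

lemma measurableSet_band (s : ℝ) : MeasurableSet (band d s) :=
  measurableSet_le measurable_const continuous_planeNormSq.measurable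

def moment (d m : ℕ) : ℝ≥0∞ := ∫⁻ x, ENNReal.ofReal (planeNormSq (x : 𝔼 d)) ^ m ∂sphMeas d

lemma div_rpow_eq_rpow_mul_rpow_neg {c m : ℝ} (hc : 0 ≤ c) (hm : 0 < m) (β : ℝ) :
    (c / m) ^ β = c ^ β * m ^ (-β) := by
  rw [Real.div_rpow hc hm.le, Real.rpow_neg hm.le, div_eq_mul_inv]

lemma exists_le_moment (hd : 1 ≤ d) : ∃ a : ℝ, 0 < a ∧ ∀ m : ℕ, 1 ≤ m →
    ENNReal.ofReal (a * (m : ℝ) ^ (-(((d : ℝ) - 1) / 2))) ≤ moment d m := by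
  set β := ((d : ℝ) - 1) / 2
  refine ⟨(2 / d) ^ β / 2, by positivity, fun m hm => ?_⟩
  have hm0 : (0 : ℝ) < m := by exact_mod_cast hm
  have hs : 1 / (2 * m : ℝ) ≤ 1 / 2 := by
    rw [div_le_div_iff₀ (by positivity) two_pos]; linarith [(Nat.one_le_cast (α := ℝ)).2 hm]
  have hhalf : ∀ x ∈ band d (1 / (2 * m)), ENNReal.ofReal (1 / 2) ≤
      ENNReal.ofReal (planeNormSq (x : 𝔼 d)) ^ m := by
    intro x hx
    rw [← ENNReal.ofReal_pow (planeNormSq_nonneg _)]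
    refine ENNReal.ofReal_le_ofReal ?_
    have hbern := one_add_mul_le_pow (a := -(1 / (2 * m) : ℝ)) (by nlinarith) m
    have hq : 1 - 1 / (2 * m : ℝ) ≤ planeNormSq (x : 𝔼 d) := hx
    calc (1 / 2 : ℝ) = 1 + m * -(1 / (2 * m)) := by field_simp; ring
      _ ≤ (1 + -(1 / (2 * m))) ^ m := hbern
      _ ≤ planeNormSq (x : 𝔼 d) ^ m := pow_le_pow_left₀ (by linarith) (by linarith) m
  calc ENNReal.ofReal ((2 / d) ^ β / 2 * (m : ℝ) ^ (-β))
      = ENNReal.ofReal (1 / 2) * ENNReal.ofReal ((4 * (1 / (2 * m)) / d) ^ β) := by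
        rw [← ENNReal.ofReal_mul (by norm_num), show 4 * (1 / (2 * m : ℝ)) / d = 2 / d / m by
          field_simp; ring, div_rpow_eq_rpow_mul_rpow_neg (by positivity) (Nat.cast_pos.2 hm) _]
        ring_nf
    _ ≤ ENNReal.ofReal (1 / 2) * sphMeas d (band d (1 / (2 * m))) :=
        mul_le_mul_right (ofReal_le_sphMeas_band hd (by positivity) hs) _
    _ = ∫⁻ x in band d (1 / (2 * m)), ENNReal.ofReal (1 / 2) ∂sphMeas d :=
        (setLIntegral_const _ _).symm
    _ ≤ ∫⁻ x in band d (1 / (2 * m)), ENNReal.ofReal (planeNormSq (x : 𝔼 d)) ^ m ∂sphMeas d :=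
        setLIntegral_mono' (measurableSet_band _) hhalf
    _ ≤ moment d m := setLIntegral_le_lintegral _ _

lemma pow_le_exp_neg_floor {q : ℝ} (hq0 : 0 ≤ q) (hq1 : q ≤ 1) {m : ℕ} (hm : 1 ≤ m) :
    q ^ m ≤ Real.exp (-⌊m * (1 - q)⌋₊) := by
  have hm0 : (0 : ℝ) < m := by exact_mod_cast hm
  have hk : (⌊m * (1 - q)⌋₊ : ℝ) ≤ m * (1 - q) := Nat.floor_le (by nlinarith)
  calc q ^ m ≤ (1 - ⌊m * (1 - q)⌋₊ / m) ^ m := by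
        refine pow_le_pow_left₀ hq0 ?_ m
        rw [le_sub_comm, div_le_iff₀ hm0]; linarith
    _ ≤ Real.exp (-⌊m * (1 - q)⌋₊) := Real.one_sub_div_pow_le_exp_neg (by nlinarith)

lemma summable_exp_neg_mul_add_one_rpow {β : ℝ} (hβ : β ≤ d) :
    Summable fun k : ℕ => Real.exp (-k) * ((k : ℝ) + 1) ^ β := by
  have h := (summable_nat_add_iff 1).2 (Real.summable_pow_mul_exp_neg_nat_mul d one_pos)
  refine (h.mul_left (Real.exp 1)).of_nonneg_of_le (fun k => by positivity) fun k => ?_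
  have hk : ((k : ℝ) + 1) ^ β ≤ ((k : ℝ) + 1) ^ d := by
    rw [← Real.rpow_natCast]
    exact Real.rpow_le_rpow_of_exponent_le (by linarith [k.cast_nonneg (α := ℝ)]) hβ
  have hexp : Real.exp (-k) = Real.exp 1 * Real.exp (-1 * ((k + 1 : ℕ) : ℝ)) := by
    rw [← Real.exp_add]; push_cast; ring_nf
  calc Real.exp (-k) * ((k : ℝ) + 1) ^ β ≤ Real.exp (-k) * ((k : ℝ) + 1) ^ d := by gcongr
    _ = _ := by rw [hexp]; push_cast; ring

/-- `x` lies in the band of width `(k + 1) / m` for `k = ⌊m (1 - q x)⌋`, and there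
`q x ^ m ≤ e^{-k}`. -/
lemma ofReal_pow_le_tsum_indicator_band (hd : 1 ≤ d) {m : ℕ} (hm : 1 ≤ m) (x : 𝕊 d) :
    ENNReal.ofReal (planeNormSq (x : 𝔼 d)) ^ m ≤
      ∑' k : ℕ, (band d ((k + 1) / m)).indicator (fun _ => ENNReal.ofReal (Real.exp (-k))) x := by
  have hm0 : (0 : ℝ) < m := by exact_mod_cast hm
  have hq0 := planeNormSq_nonneg (x : 𝔼 d)
  have hq1 := planeNormSq_le_one hd x.2
  set k := ⌊m * (1 - planeNormSq (x : 𝔼 d))⌋₊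
  have hx : x ∈ band d ((k + 1) / m) := by
    show 1 - (k + 1) / m ≤ planeNormSq (x : 𝔼 d)
    have := Nat.lt_floor_add_one (m * (1 - planeNormSq (x : 𝔼 d)))
    rw [sub_le_comm, le_div_iff₀ hm0]; linarith
  refine le_trans ?_ (ENNReal.le_tsum k)
  rw [Set.indicator_of_mem hx, ← ENNReal.ofReal_pow hq0]
  exact ENNReal.ofReal_le_ofReal (pow_le_exp_neg_floor hq0 hq1 hm)

lemma exists_moment_le (hd : 2 ≤ d) : ∃ b : ℝ, ∀ m : ℕ, 1 ≤ m →
    moment d m ≤ ENNReal.ofReal (b * (m : ℝ) ^ (-(((d : ℝ) - 1) / 2))) := by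
  set β := ((d : ℝ) - 1) / 2 with hβ
  obtain ⟨b, hb0, hb⟩ := exists_sphMeas_band_le hd
  rw [← hβ] at hb
  have hsum := summable_exp_neg_mul_add_one_rpow (d := d) (β := β)
    (by rw [hβ]; linarith [d.cast_nonneg (α := ℝ)])
  refine ⟨b * ∑' k : ℕ, Real.exp (-k) * ((k : ℝ) + 1) ^ β, fun m hm => ?_⟩
  have hm0 : (0 : ℝ) < m := by exact_mod_cast hm
  have hterm : ∀ k : ℕ, ∫⁻ x, (band d ((k + 1) / m)).indicator
      (fun _ => ENNReal.ofReal (Real.exp (-k))) x ∂sphMeas d ≤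
      ENNReal.ofReal (b * (m : ℝ) ^ (-β) * (Real.exp (-k) * ((k : ℝ) + 1) ^ β)) := by
    intro k
    rw [lintegral_indicator_const (measurableSet_band _)]
    refine (mul_le_mul_right (hb _ (div_pos k.cast_add_one_pos hm0)) _).trans_eq ?_
    rw [← ENNReal.ofReal_mul (by positivity), div_rpow_eq_rpow_mul_rpow_neg (by positivity) hm0]
    congr 1; ring
  calc moment d m ≤ ∫⁻ x, ∑' k : ℕ, (band d ((k + 1) / m)).indicator
        (fun _ => ENNReal.ofReal (Real.exp (-k))) x ∂sphMeas d :=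
        lintegral_mono (ofReal_pow_le_tsum_indicator_band (by omega) hm)
    _ = ∑' k : ℕ, ∫⁻ x, (band d ((k + 1) / m)).indicator
        (fun _ => ENNReal.ofReal (Real.exp (-k))) x ∂sphMeas d :=
        lintegral_tsum fun k => (measurable_const.indicator (measurableSet_band _)).aemeasurable
    _ ≤ ∑' k : ℕ, ENNReal.ofReal (b * (m : ℝ) ^ (-β) * (Real.exp (-k) * ((k : ℝ) + 1) ^ β)) :=
        ENNReal.tsum_le_tsum hterm
    _ = ENNReal.ofReal (b * (∑' k : ℕ, Real.exp (-k) * ((k : ℝ) + 1) ^ β) * (m : ℝ) ^ (-β)) := by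
        rw [← ENNReal.ofReal_tsum_of_nonneg (fun k => by positivity) (hsum.mul_left _),
          tsum_mul_left]
        congr 1; ring

def cap (d m : ℕ) : Set (𝕊 d) := {x | Real.arccos √(planeNormSq (x : 𝔼 d)) ≤ 1 / √m}

lemma measurableSet_cap (m : ℕ) : MeasurableSet (cap d m) :=
  measurableSet_le (Real.continuous_arccos.comp
    (Real.continuous_sqrt.comp continuous_planeNormSq)).measurable measurable_const

lemma one_div_sqrt_bounds {m : ℕ} (hm : 1 ≤ m) :
    0 < 1 / √(m : ℝ) ∧ 1 / √(m : ℝ) ≤ 1 ∧ (1 / √(m : ℝ)) ^ 2 = 1 / m := by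
  have hm1 : (1 : ℝ) ≤ m := by exact_mod_cast hm
  refine ⟨by positivity, ?_, by rw [div_pow, one_pow, Real.sq_sqrt (by linarith)]⟩
  rw [div_le_one (by positivity)]
  exact Real.one_le_sqrt.2 hm1

lemma cap_subset_band (hd : 1 ≤ d) {m : ℕ} (hm : 1 ≤ m) : cap d m ⊆ band d (1 / m) := by
  intro x hx
  obtain ⟨ht0, ht1, ht2⟩ := one_div_sqrt_bounds hm
  have hq0 := planeNormSq_nonneg (x : 𝔼 d)
  have hcos : Real.cos (1 / √m) ≤ √(planeNormSq (x : 𝔼 d)) := by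
    have h := Real.cos_le_cos_of_nonneg_of_le_pi (Real.arccos_nonneg _)
      (ht1.trans (by linarith [Real.pi_gt_three])) hx.out
    rwa [Real.cos_arccos (by linarith [Real.sqrt_nonneg (planeNormSq (x : 𝔼 d))])
      (Real.sqrt_le_one.2 (planeNormSq_le_one hd x.2))] at h
  have hlow := Real.one_sub_sq_div_two_le_cos (x := 1 / √m)
  rw [ht2] at hlow
  have hsq := pow_le_pow_left₀ (by nlinarith) (hlow.trans hcos) 2
  rw [Real.sq_sqrt hq0] at hsq
  show 1 - 1 / (m : ℝ) ≤ _
  nlinarith [sq_nonneg (1 / (m : ℝ))]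

lemma band_subset_cap (hd : 1 ≤ d) {m : ℕ} (hm : 1 ≤ m) : band d (1 / (8 * m)) ⊆ cap d m := by
  intro x hx
  obtain ⟨ht0, ht1, ht2⟩ := one_div_sqrt_bounds hm
  have hq0 := planeNormSq_nonneg (x : 𝔼 d)
  have hq1 := planeNormSq_le_one hd x.2
  have hcos := Real.cos_le_one_sub_mul_cos_sq (x := 1 / √m)
    (by rw [abs_of_pos ht0]; linarith [Real.pi_gt_three])
  rw [ht2] at hcos
  have hpi : 1 / (8 * m) ≤ 2 / Real.pi ^ 2 * (1 / m) := by
    have h8 : (1 / 8 : ℝ) ≤ 2 / Real.pi ^ 2 := by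
      rw [le_div_iff₀ (by positivity)]; nlinarith [Real.pi_lt_four, Real.pi_pos]
    rw [show 1 / (8 * m : ℝ) = 1 / 8 * (1 / m) by ring]
    exact mul_le_mul_of_nonneg_right h8 (by positivity)
  have hq : 1 - 1 / (8 * m) ≤ planeNormSq (x : 𝔼 d) := hx
  have hsqrt : planeNormSq (x : 𝔼 d) ≤ √(planeNormSq (x : 𝔼 d)) := by
    rw [Real.le_sqrt hq0 hq0]; nlinarith
  show Real.arccos _ ≤ _
  calc Real.arccos √(planeNormSq (x : 𝔼 d)) ≤ Real.arccos (Real.cos (1 / √m)) :=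
        Real.arccos_le_arccos (by linarith)
    _ = 1 / √m := Real.arccos_cos ht0.le (ht1.trans (by linarith [Real.pi_gt_three]))

def IsComparableToRpowNeg (f : ℕ → ℝ≥0∞) (β : ℝ) : Prop :=
  ∃ a b : ℝ, 0 < a ∧ ∀ m : ℕ, 1 ≤ m →
    ENNReal.ofReal (a * (m : ℝ) ^ (-β)) ≤ f m ∧ f m ≤ ENNReal.ofReal (b * (m : ℝ) ^ (-β))

lemma isComparableToRpowNeg_moment (hd : 2 ≤ d) :
    IsComparableToRpowNeg (moment d) (((d : ℝ) - 1) / 2) := by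
  obtain ⟨a, ha, hlow⟩ := exists_le_moment (by omega : 1 ≤ d)
  obtain ⟨b, hup⟩ := exists_moment_le hd
  exact ⟨a, b, ha, fun m hm => ⟨hlow m hm, hup m hm⟩⟩

lemma isComparableToRpowNeg_sphMeas_cap (hd : 2 ≤ d) :
    IsComparableToRpowNeg (fun m => sphMeas d (cap d m)) (((d : ℝ) - 1) / 2) := by
  obtain ⟨b, -, hb⟩ := exists_sphMeas_band_le hd
  refine ⟨(1 / (2 * d)) ^ (((d : ℝ) - 1) / 2), b, by positivity, fun m hm => ⟨?_, ?_⟩⟩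
  · refine le_trans ?_ ((ofReal_le_sphMeas_band (by omega) (by positivity) ?_).trans
      (measure_mono (band_subset_cap (by omega) hm)))
    · rw [show 4 * (1 / (8 * m : ℝ)) / d = 1 / (2 * d) / m by field_simp; ring,
        div_rpow_eq_rpow_mul_rpow_neg (by positivity) (Nat.cast_pos.2 hm) _]
    · rw [div_le_div_iff₀ (by positivity) two_pos]
      linarith [(Nat.one_le_cast (α := ℝ)).2 hm]
  · refine (measure_mono (cap_subset_band (by omega) hm)).trans ((hb _ (by positivity)).trans_eq ?_)
    rw [div_rpow_eq_rpow_mul_rpow_neg zero_le_one (Nat.cast_pos.2 hm) _, Real.one_rpow, one_mul]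

lemma IsComparableToRpowNeg.exists_toReal {f : ℕ → ℝ≥0∞} {β : ℝ}
    (h : IsComparableToRpowNeg f β) :
    ∃ a b : ℝ, 0 < a ∧ 0 < b ∧ ∀ m : ℕ, 1 ≤ m → f m = ENNReal.ofReal (f m).toReal ∧
      a * (m : ℝ) ^ (-β) ≤ (f m).toReal ∧ (f m).toReal ≤ b * (m : ℝ) ^ (-β) := by
  obtain ⟨a, b, ha, hab⟩ := h
  have hb : 0 < b := by
    have h1 := (hab 1 le_rfl).1.trans (hab 1 le_rfl).2
    simp only [Nat.cast_one, Real.one_rpow, mul_one] at h1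
    exact ENNReal.ofReal_pos.1 ((ENNReal.ofReal_pos.2 ha).trans_le h1)
  refine ⟨a, b, ha, hb, fun m hm => ?_⟩
  have hfin : f m ≠ ⊤ := ne_top_of_le_ne_top ENNReal.ofReal_ne_top (hab m hm).2
  exact ⟨(ENNReal.ofReal_toReal hfin).symm, (ENNReal.ofReal_le_iff_le_toReal hfin).1 (hab m hm).1,
    ENNReal.toReal_le_of_le_ofReal (by positivity) (hab m hm).2⟩

lemma coe_nnnorm_sq {E : Type*} [SeminormedAddGroup E] (z : E) :
    (‖z‖₊ : ℝ≥0∞) ^ 2 = ENNReal.ofReal (‖z‖ ^ 2) := by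
  rw [ENNReal.ofReal_pow (norm_nonneg _), ofReal_norm]
  rfl

lemma nnnorm_Yhw_sq (c : ℝ) (n : ℕ) (x : 𝕊 d) :
    (‖Yhw d c n x‖₊ : ℝ≥0∞) ^ 2 =
      ENNReal.ofReal (c ^ 2) * ENNReal.ofReal (planeNormSq (x : 𝔼 d)) ^ n := by
  have hz : ‖((x : 𝔼 d) 0 : ℂ) + Complex.I * ((x : 𝔼 d) 1 : ℂ)‖ ^ 2 = planeNormSq (x : 𝔼 d) := by
    rw [mul_comm, Complex.norm_add_mul_I, Real.sq_sqrt (by positivity), planeNormSq]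
  have hnorm : ‖Yhw d c n x‖ ^ 2 = c ^ 2 * planeNormSq (x : 𝔼 d) ^ n := by
    rw [Yhw, norm_mul, norm_pow, Complex.norm_real, Real.norm_eq_abs, mul_pow, sq_abs, ← pow_mul,
      mul_comm n 2, pow_mul, hz]
  rw [← ENNReal.ofReal_pow (planeNormSq_nonneg _), ← ENNReal.ofReal_mul (sq_nonneg _), ← hnorm,
    coe_nnnorm_sq]

lemma lintegral_nnnorm_Yhw_sq (c : ℝ) (n : ℕ) :
    ∫⁻ x, (‖Yhw d c n x‖₊ : ℝ≥0∞) ^ 2 ∂sphMeas d = ENNReal.ofReal (c ^ 2) * moment d n := by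
  simp_rw [nnnorm_Yhw_sq]
  exact lintegral_const_mul' _ _ ENNReal.ofReal_ne_top

lemma prod_Yhw {ι : Type*} (s : Finset ι) (c : ι → ℝ) (n : ι → ℕ) (x : 𝕊 d) :
    ∏ i ∈ s, Yhw d (c i) (n i) x = Yhw d (∏ i ∈ s, c i) (∑ i ∈ s, n i) x := by
  simp only [Yhw, Finset.prod_mul_distrib, Finset.prod_pow_eq_pow_sum]
  push_cast; rfl

def WithinFactor (C : ℝ) (X : ℝ≥0∞) (Y : ℝ) : Prop :=
  ENNReal.ofReal (Y / C) ≤ X ∧ X ≤ ENNReal.ofReal (C * Y)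

lemma WithinFactor.mono {C C' Y : ℝ} {X : ℝ≥0∞} (h : WithinFactor C X Y) (hC : 0 < C)
    (hCC' : C ≤ C') (hY : 0 ≤ Y) : WithinFactor C' X Y :=
  ⟨(ENNReal.ofReal_le_ofReal (div_le_div_of_nonneg_left hY hC hCC')).trans h.1,
    h.2.trans (ENNReal.ofReal_le_ofReal (mul_le_mul_of_nonneg_right hCC' hY))⟩

lemma withinFactor_ofReal {C V Y : ℝ} (hlow : Y / C ≤ V) (hup : V ≤ C * Y) :
    WithinFactor C (ENNReal.ofReal V) Y :=
  ⟨ENNReal.ofReal_le_ofReal hlow, ENNReal.ofReal_le_ofReal hup⟩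

lemma prod_rpow_eq_mul_prod_erase_rpow {ι : Type*} [Fintype ι] [DecidableEq ι] {f : ι → ℝ}
    (hf : ∀ i, 0 ≤ f i) (i0 : ι) (β : ℝ) :
    ∏ i, f i ^ β = f i0 ^ β * (∏ i ∈ Finset.univ.erase i0, f i) ^ β := by
  rw [← Finset.mul_prod_erase _ _ (Finset.mem_univ i0), Real.finsetProd_rpow _ _ fun i _ => hf i]

lemma prod_inv_bounds {ι : Type*} [Fintype ι] {β a b : ℝ} (ha : 0 < a) (hb : 0 < b)
    {m x : ι → ℝ} (hm : ∀ i, 0 < m i)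
    (hx : ∀ i, a * m i ^ (-β) ≤ x i ∧ x i ≤ b * m i ^ (-β)) :
    b⁻¹ ^ Fintype.card ι * ∏ i, m i ^ β ≤ ∏ i, (x i)⁻¹ ∧
      ∏ i, (x i)⁻¹ ≤ a⁻¹ ^ Fintype.card ι * ∏ i, m i ^ β := by
  have hinv : ∀ c i, (c * m i ^ (-β))⁻¹ = c⁻¹ * m i ^ β := fun c i => by
    rw [mul_inv, Real.rpow_neg (hm i).le, inv_inv]
  have hpos : ∀ i, 0 < a * m i ^ (-β) := fun i => mul_pos ha (Real.rpow_pos_of_pos (hm i) _)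
  have hnonneg : ∀ i, 0 ≤ b⁻¹ * m i ^ β := fun i =>
    mul_nonneg (inv_nonneg.2 hb.le) (Real.rpow_nonneg (hm i).le _)
  have hlow : ∀ i, b⁻¹ * m i ^ β ≤ (x i)⁻¹ := fun i =>
    hinv b i ▸ inv_anti₀ ((hpos i).trans_le (hx i).1) (hx i).2
  have hup : ∀ i, (x i)⁻¹ ≤ a⁻¹ * m i ^ β := fun i => hinv a i ▸ inv_anti₀ (hpos i) (hx i).1
  rw [← Finset.card_univ, ← Finset.prod_const, ← Finset.prod_mul_distrib,
    ← Finset.prod_const, ← Finset.prod_mul_distrib]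
  exact ⟨Finset.prod_le_prod (fun i _ => hnonneg i) fun i _ => hlow i,
    Finset.prod_le_prod (fun i _ => (hnonneg i).trans (hlow i)) fun i _ => hup i⟩

lemma rpow_neg_bounds_of_le_of_le_mul {β a b x n N c : ℝ} (hβ : 0 ≤ β) (ha : 0 < a) (hb : 0 < b)
    (hn : 0 < n) (hc : 0 < c) (hnN : n ≤ N) (hNn : N ≤ c * n)
    (hx : a * N ^ (-β) ≤ x ∧ x ≤ b * N ^ (-β)) :
    a * (c ^ β)⁻¹ * n ^ (-β) ≤ x ∧ x ≤ b * n ^ (-β) := by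
  refine ⟨le_trans ?_ hx.1, hx.2.trans (mul_le_mul_of_nonneg_left
    (Real.rpow_le_rpow_of_nonpos hn hnN (neg_nonpos.2 hβ)) hb.le)⟩
  rw [mul_assoc, ← Real.rpow_neg hc.le, ← Real.mul_rpow hc.le hn.le]
  exact mul_le_mul_of_nonneg_left
    (Real.rpow_le_rpow_of_nonpos (hn.trans_le hnN) hNn (neg_nonpos.2 hβ)) ha.le

lemma rpow_mul_rpow_neg {x : ℝ} (hx : 0 < x) (β : ℝ) : x ^ β * x ^ (-β) = 1 := by
  rw [← Real.rpow_add hx, add_neg_cancel, Real.rpow_zero]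

/-- Since `N = n₁ + ⋯ + n_α` lies between `n₁` and `α n₁`, the factor `n₁^β` of
`∏ (j nᵢ)⁻¹ ≍ ∏ nᵢ^β` is cancelled by `j N ≍ n₁^(-β)`. -/
lemma withinFactor_prod_inv_mul {α : ℕ} {β a b : ℝ} (hβ : 0 ≤ β) (ha : 0 < a) (hb : 0 < b)
    {j : ℕ → ℝ} (hj : ∀ m : ℕ, 1 ≤ m → a * (m : ℝ) ^ (-β) ≤ j m ∧ j m ≤ b * (m : ℝ) ^ (-β))
    {nn : Fin α → ℕ} {i0 : Fin α} (hpos : ∀ i, 1 ≤ nn i) (hmax : ∀ i, nn i ≤ nn i0) :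
    WithinFactor (max (b / a ^ α) (b ^ α * α ^ β / a))
      (ENNReal.ofReal ((∏ i, (j (nn i))⁻¹) * j (∑ i, nn i)))
      ((∏ i ∈ Finset.univ.erase i0, (nn i : ℝ)) ^ β) := by
  set P := (∏ i ∈ Finset.univ.erase i0, (nn i : ℝ)) ^ β
  have hn : ∀ i, (0 : ℝ) < nn i := fun i => by exact_mod_cast hpos i
  have hP : 0 ≤ P := by positivity
  have hα : (0 : ℝ) < α := by exact_mod_cast i0.pos
  have hprod := prod_inv_bounds ha hb hn fun i => hj _ (hpos i)
  rw [prod_rpow_eq_mul_prod_erase_rpow (fun i => (hn i).le) i0 β, Fintype.card_fin] at hprod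
  have hN0 : (nn i0 : ℝ) ≤ (∑ i, nn i : ℕ) := by
    exact_mod_cast Finset.single_le_sum (f := nn) (fun i _ => Nat.zero_le _) (Finset.mem_univ i0)
  have hNα : ((∑ i, nn i : ℕ) : ℝ) ≤ α * nn i0 := by
    exact_mod_cast (Finset.sum_le_sum fun i _ => hmax i).trans_eq (by simp)
  have hjN := rpow_neg_bounds_of_le_of_le_mul hβ ha hb (hn i0) hα hN0 hNα
    (hj _ (by exact_mod_cast (hn i0).trans_le hN0))
  have hcancel := rpow_mul_rpow_neg (hn i0) β
  refine withinFactor_ofReal ?_ ?_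
  · calc P / max (b / a ^ α) (b ^ α * α ^ β / a) ≤ P / (b ^ α * α ^ β / a) :=
          div_le_div_of_nonneg_left hP (by positivity) (le_max_right _ _)
      _ = b⁻¹ ^ α * ((nn i0 : ℝ) ^ β * P) * (a * ((α : ℝ) ^ β)⁻¹ * (nn i0 : ℝ) ^ (-β)) := by
          rw [show b⁻¹ ^ α * ((nn i0 : ℝ) ^ β * P) * (a * ((α : ℝ) ^ β)⁻¹ * (nn i0 : ℝ) ^ (-β)) =
            b⁻¹ ^ α * a * ((α : ℝ) ^ β)⁻¹ * P * ((nn i0 : ℝ) ^ β * (nn i0 : ℝ) ^ (-β)) by ring,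
            hcancel, mul_one, inv_pow]
          field_simp
      _ ≤ _ := mul_le_mul hprod.1 hjN.1 (by positivity)
          ((mul_nonneg (by positivity) (mul_nonneg (by positivity) hP)).trans hprod.1)
  · calc (∏ i, (j (nn i))⁻¹) * j (∑ i, nn i)
        ≤ a⁻¹ ^ α * ((nn i0 : ℝ) ^ β * P) * (b * (nn i0 : ℝ) ^ (-β)) :=
          mul_le_mul hprod.2 hjN.2 ((by positivity : (0 : ℝ) ≤ _).trans hjN.1) (by positivity)
      _ = b / a ^ α * P := by
          rw [show a⁻¹ ^ α * ((nn i0 : ℝ) ^ β * P) * (b * (nn i0 : ℝ) ^ (-β)) =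
            a⁻¹ ^ α * b * P * ((nn i0 : ℝ) ^ β * (nn i0 : ℝ) ^ (-β)) by ring, hcancel, mul_one,
            inv_pow]
          field_simp
      _ ≤ _ := mul_le_mul_of_nonneg_right (le_max_left _ _) hP

lemma withinFactor_prod_rpow_mul {α : ℕ} {β a b : ℝ} (ha : 0 < a) {e : ℕ → ℝ}
    (he : ∀ m : ℕ, 1 ≤ m → a * (m : ℝ) ^ (-β) ≤ e m ∧ e m ≤ b * (m : ℝ) ^ (-β))
    {nn : Fin α → ℕ} {i0 : Fin α} (hpos : ∀ i, 1 ≤ nn i) :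
    WithinFactor (max b a⁻¹) (ENNReal.ofReal ((∏ i, (nn i : ℝ) ^ β) * e (nn i0)))
      ((∏ i ∈ Finset.univ.erase i0, (nn i : ℝ)) ^ β) := by
  set P := (∏ i ∈ Finset.univ.erase i0, (nn i : ℝ)) ^ β
  have hn : ∀ i, (0 : ℝ) < nn i := fun i => by exact_mod_cast hpos i
  have hP : 0 ≤ P := by positivity
  have hcancel := rpow_mul_rpow_neg (hn i0) β
  have hval : (∏ i, (nn i : ℝ) ^ β) * e (nn i0) = P * ((nn i0 : ℝ) ^ β * e (nn i0)) := by
    rw [prod_rpow_eq_mul_prod_erase_rpow (fun i => (hn i).le) i0 β]; ring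
  have hlow : a ≤ (nn i0 : ℝ) ^ β * e (nn i0) := by
    simpa [← mul_assoc, mul_comm _ a, mul_assoc a, hcancel] using
      mul_le_mul_of_nonneg_left (he _ (hpos i0)).1 (by positivity : 0 ≤ (nn i0 : ℝ) ^ β)
  have hup : (nn i0 : ℝ) ^ β * e (nn i0) ≤ b := by
    simpa [← mul_assoc, mul_comm _ b, mul_assoc b, hcancel] using
      mul_le_mul_of_nonneg_left (he _ (hpos i0)).2 (by positivity : 0 ≤ (nn i0 : ℝ) ^ β)
  rw [hval]
  refine withinFactor_ofReal ?_ ?_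
  · calc P / max b a⁻¹ ≤ P / a⁻¹ := div_le_div_of_nonneg_left hP (by positivity) (le_max_right _ _)
      _ ≤ P * ((nn i0 : ℝ) ^ β * e (nn i0)) := by
          rw [div_inv_eq_mul]; exact mul_le_mul_of_nonneg_left hlow hP
  · calc P * ((nn i0 : ℝ) ^ β * e (nn i0)) ≤ P * b := mul_le_mul_of_nonneg_left hup hP
      _ ≤ max b a⁻¹ * P := by rw [mul_comm]; exact mul_le_mul_of_nonneg_right (le_max_left _ _) hP

lemma cap_anti {m n : ℕ} (hm : 1 ≤ m) (hmn : m ≤ n) : cap d n ⊆ cap d m := fun _ hx =>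
  hx.out.trans (one_div_le_one_div_of_le (Real.sqrt_pos.2 (by exact_mod_cast hm))
    (Real.sqrt_le_sqrt (by exact_mod_cast hmn)))

lemma Ytil_eq_indicator (n : ℕ) (x : 𝕊 d) :
    Ytil d n x = (cap d n).indicator (fun _ => (n : ℝ) ^ (((d : ℝ) - 1) / 4)) x := by
  simp only [Ytil, Set.indicator, cap, planeNormSq, Set.mem_ofPred_eq]
  congr

lemma lintegral_nnnorm_prod_Ytil_sq {α : ℕ} {nn : Fin α → ℕ} {i0 : Fin α}
    (hpos : ∀ i, 1 ≤ nn i) (hmax : ∀ i, nn i ≤ nn i0) :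
    ∫⁻ x, (‖∏ i, Ytil d (nn i) x‖₊ : ℝ≥0∞) ^ 2 ∂sphMeas d =
      ENNReal.ofReal (∏ i, (nn i : ℝ) ^ (((d : ℝ) - 1) / 2)) * sphMeas d (cap d (nn i0)) := by
  have hpt : ∀ x, (‖∏ i, Ytil d (nn i) x‖₊ : ℝ≥0∞) ^ 2 = (cap d (nn i0)).indicator
      (fun _ => ENNReal.ofReal (∏ i, (nn i : ℝ) ^ (((d : ℝ) - 1) / 2))) x := by
    intro x
    by_cases hx : x ∈ cap d (nn i0)
    · have hall : ∀ i, x ∈ cap d (nn i) := fun i => cap_anti (hpos i) (hmax i) hx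
      simp only [Ytil_eq_indicator, Set.indicator_of_mem (hall _)]
      rw [coe_nnnorm_sq, Real.norm_eq_abs, sq_abs, ← Finset.prod_pow]
      congr 1
      refine Finset.prod_congr rfl fun i _ => ?_
      rw [← Real.rpow_natCast, ← Real.rpow_mul (Nat.cast_nonneg _)]
      norm_num; ring_nf
    · rw [Set.indicator_of_notMem hx, Finset.prod_eq_zero (Finset.mem_univ i0)
        (by rw [Ytil_eq_indicator, Set.indicator_of_notMem hx])]
      simp
  simp_rw [hpt]
  exact lintegral_indicator_const (measurableSet_cap _) _

lemma exists_withinFactor_lintegral_prod_Yhw (hd : 2 ≤ d) {c : ℕ → ℝ}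
    (hc : ∀ n : ℕ, 1 ≤ n → 0 < c n ∧ ∫⁻ x, (‖Yhw d (c n) n x‖₊ : ℝ≥0∞) ^ 2 ∂sphMeas d = 1)
    (α : ℕ) : ∃ C : ℝ, 1 ≤ C ∧ ∀ (nn : Fin α → ℕ) (i0 : Fin α), (∀ i, 1 ≤ nn i) →
      (∀ i, nn i ≤ nn i0) →
      WithinFactor C (∫⁻ x, (‖∏ i, Yhw d (c (nn i)) (nn i) x‖₊ : ℝ≥0∞) ^ 2 ∂sphMeas d)
        ((∏ i ∈ Finset.univ.erase i0, (nn i : ℝ)) ^ (((d : ℝ) - 1) / 2)) := by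
  set β := ((d : ℝ) - 1) / 2
  obtain ⟨a, b, ha, hb, hj⟩ := (isComparableToRpowNeg_moment hd).exists_toReal
  have hc_sq : ∀ n, 1 ≤ n → c n ^ 2 = ((moment d n).toReal)⁻¹ := fun n hn => by
    have h := (hc n hn).2
    rw [lintegral_nnnorm_Yhw_sq, (hj n hn).1, ← ENNReal.ofReal_mul (sq_nonneg _),
      ENNReal.ofReal_eq_one] at h
    exact eq_inv_of_mul_eq_one_left h
  refine ⟨max 1 (max (b / a ^ α) (b ^ α * α ^ β / a)), le_max_left _ _,
    fun nn i0 hpos hmax => ?_⟩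
  have hsum : 1 ≤ ∑ i, nn i :=
    (hpos i0).trans (Finset.single_le_sum (fun i _ => Nat.zero_le _) (Finset.mem_univ i0))
  have hint : ∫⁻ x, (‖∏ i, Yhw d (c (nn i)) (nn i) x‖₊ : ℝ≥0∞) ^ 2 ∂sphMeas d =
      ENNReal.ofReal ((∏ i, ((moment d (nn i)).toReal)⁻¹) * (moment d (∑ i, nn i)).toReal) := by
    simp_rw [prod_Yhw, lintegral_nnnorm_Yhw_sq, ← Finset.prod_pow, Finset.prod_congr rfl
      fun i _ => hc_sq _ (hpos i)]
    rw [ENNReal.ofReal_mul (Finset.prod_nonneg fun i _ => by positivity), ← (hj _ hsum).1]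
  rw [hint]
  exact (withinFactor_prod_inv_mul (sub_one_div_two_nonneg (by omega)) ha hb
    (fun m hm => (hj m hm).2) hpos hmax).mono (by positivity) (le_max_right _ _) (by positivity)

lemma exists_withinFactor_lintegral_prod_Ytil (hd : 2 ≤ d) (α : ℕ) :
    ∃ C : ℝ, 1 ≤ C ∧ ∀ (nn : Fin α → ℕ) (i0 : Fin α), (∀ i, 1 ≤ nn i) → (∀ i, nn i ≤ nn i0) →
      WithinFactor C (∫⁻ x, (‖∏ i, Ytil d (nn i) x‖₊ : ℝ≥0∞) ^ 2 ∂sphMeas d)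
        ((∏ i ∈ Finset.univ.erase i0, (nn i : ℝ)) ^ (((d : ℝ) - 1) / 2)) := by
  obtain ⟨a, b, ha, -, he⟩ := (isComparableToRpowNeg_sphMeas_cap hd).exists_toReal
  beta_reduce at he
  refine ⟨max 1 (max b a⁻¹), le_max_left _ _, fun nn i0 hpos hmax => ?_⟩
  rw [lintegral_nnnorm_prod_Ytil_sq hpos hmax, (he _ (hpos i0)).1,
    ← ENNReal.ofReal_mul (Finset.prod_nonneg fun i _ => by positivity)]
  exact (withinFactor_prod_rpow_mul ha (fun m hm => (he m hm).2) hpos).mono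
    (lt_max_of_lt_right (inv_pos.2 ha)) (le_max_right _ _) (by positivity)

end

end HighestWeight

/-- Lemma 18.1, multilinear estimates for highest-weight spherical
harmonics: for decreasing `n₁ ≥ ⋯ ≥ n_α ≥ 1`, the integrals
`∫ |Y_{n₁} ⋯ Y_{n_α}|² dμ_d` and `∫ |Ỹ_{n₁} ⋯ Ỹ_{n_α}|² dμ_d` are both comparable to
`(n₂ ⋯ n_α)^{(d−1)/2}`. -/
theorem stmt16 (d : ℕ) (hd : 2 ≤ d) (c : ℕ → ℝ)
    -- `c n` is the `L²`-normalizing constant of `Y_n`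
    (hc : ∀ n : ℕ, 1 ≤ n → 0 < c n ∧
      ∫⁻ x, ((‖Yhw d (c n) n x‖₊ : ℝ≥0∞)) ^ 2 ∂(sphMeas d) = 1) :
    ∀ α : ℕ, ∀ hα : 2 ≤ α,
      ∃ C : ℝ, 1 ≤ C ∧
        ∀ nn : Fin α → ℕ, (∀ i, 1 ≤ nn i) → (∀ i j : Fin α, i ≤ j → nn j ≤ nn i) →
          (ENNReal.ofReal
              ((∏ i ∈ Finset.univ.erase (⟨0, by omega⟩ : Fin α), (nn i : ℝ)) ^ (((d : ℝ) - 1) / 2) / C)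
            ≤ ∫⁻ x, ((‖∏ i, Yhw d (c (nn i)) (nn i) x‖₊ : ℝ≥0∞)) ^ 2 ∂(sphMeas d) ∧
          ∫⁻ x, ((‖∏ i, Yhw d (c (nn i)) (nn i) x‖₊ : ℝ≥0∞)) ^ 2 ∂(sphMeas d)
            ≤ ENNReal.ofReal
              (C * (∏ i ∈ Finset.univ.erase (⟨0, by omega⟩ : Fin α), (nn i : ℝ)) ^ (((d : ℝ) - 1) / 2)))
          ∧
          (ENNReal.ofReal
              ((∏ i ∈ Finset.univ.erase (⟨0, by omega⟩ : Fin α), (nn i : ℝ)) ^ (((d : ℝ) - 1) / 2) / C)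
            ≤ ∫⁻ x, ((‖∏ i, Ytil d (nn i) x‖₊ : ℝ≥0∞)) ^ 2 ∂(sphMeas d) ∧
          ∫⁻ x, ((‖∏ i, Ytil d (nn i) x‖₊ : ℝ≥0∞)) ^ 2 ∂(sphMeas d)
            ≤ ENNReal.ofReal
              (C * (∏ i ∈ Finset.univ.erase (⟨0, by omega⟩ : Fin α), (nn i : ℝ)) ^ (((d : ℝ) - 1) / 2))) := by
  intro α hα
  obtain ⟨C₁, hC₁, hY⟩ := HighestWeight.exists_withinFactor_lintegral_prod_Yhw hd hc α
  obtain ⟨C₂, hC₂, hYtil⟩ := HighestWeight.exists_withinFactor_lintegral_prod_Ytil hd α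
  refine ⟨max C₁ C₂, hC₁.trans (le_max_left _ _), fun nn hpos hanti => ?_⟩
  have hmax : ∀ i, nn i ≤ nn ⟨0, by omega⟩ := fun i => hanti _ _ (Nat.zero_le _)
  exact ⟨(hY nn _ hpos hmax).mono (by linarith) (le_max_left _ _) (by positivity),
    (hYtil nn _ hpos hmax).mono (by linarith) (le_max_right _ _) (by positivity)⟩
end
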